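/- arXiv:1607.06126 — 2 statements merged into one kernel-verified Lean document; each statement's English description precedes it below -/
import Mathlib

section
/- Let k ≥ 3, s ≥ 2 be integers, let u be a real number with u ≥ 3 and u ≥ s + 1, and let n = (u+s)(k−1) + s + 1. Let G ⊆ C([n],k) be shifted with ν(G) ≤ s. If ν(G(∅,s)) ≥ 2, then ∑_{i=1}^{s} |G({i},s)| ≤ s·C(n−s,k−1) − (4/3)·C(n−k−s,k−1). -/
set_option maxHeartbeats 4000000

open Finset

/-- The matching number of a set family: the maximum number of pairwise disjoint members. -/
def matchingNumber (F : Finset (Finset ℕ)) : ℕ :=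
  (F.powerset.filter fun M => ∀ A ∈ M, ∀ B ∈ M, A ≠ B → Disjoint A B).sup Finset.card

/-- A family of subsets of `[n]` is shifted if it is invariant under all `(i,j)`-shifts,
`1 ≤ i < j ≤ n`. -/
def IsShifted (n : ℕ) (F : Finset (Finset ℕ)) : Prop :=
  ∀ i j : ℕ, 1 ≤ i → i < j → j ≤ n → ∀ A ∈ F, j ∈ A → i ∉ A → insert i (A.erase j) ∈ F

/-- `famSlice G Q p` is the family `G(Q,p) = {A \ Q : A ∈ G, A ∩ [p] = Q}`. -/
def famSlice (G : Finset (Finset ℕ)) (Q : Finset ℕ) (p : ℕ) : Finset (Finset ℕ) :=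
  (G.filter fun A => A ∩ Finset.Icc 1 p = Q).image fun A => A \ Q

private lemma int_caseA (b g q r s e m : ℤ) (hb : 1 ≤ b) (hq : b + g = q) (h2s : 2*s ≤ q)
    (hm1 : 1 ≤ m) (hmr : m + 1 ≤ s) (hrs : r = s)
    (he1 : e ≤ g) (he2 : e + 1 + m ≤ s) (hee : 0 ≤ e) (hgg : 0 ≤ g) :
    (m-1)*(6*b+6*q) + (s-m)*(12*b+6*e) ≤ 12*(s-1)*b + 6*(s-2)*g + 4*q := by
  rcases le_total g (s - m) with hc | hc
  · nlinarith [mul_nonneg (by linarith : (0:ℤ) ≤ s - m) (by linarith : (0:ℤ) ≤ g - e)]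
  · nlinarith [mul_nonneg (by linarith : (0:ℤ) ≤ 6*(s-m)-2) (by linarith : (0:ℤ) ≤ g - (s-m)),
      mul_nonneg (by linarith : (0:ℤ) ≤ s - m) (by linarith : (0:ℤ) ≤ (s-m) - 1 - e)]

private lemma int_caseB (b g q r s : ℤ) (hb : 1 ≤ b) (hq : b + g = q) (h2s : 2*s ≤ q)
    (hr1 : 1 ≤ r) (hrs : r + 1 ≤ s) (hgg : 0 ≤ g) :
    (r-1)*(6*b+6*q) + (s-r+1)*(12*(s-r)) ≤ 12*(s-1)*b + 6*(s-2)*g + 4*q := by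
  nlinarith [mul_nonneg (by linarith : (0:ℤ) ≤ 6*(s-r)-2) (by linarith : (0:ℤ) ≤ b + g - 2*(s-r) - 2),
    mul_nonneg (by linarith : (0:ℤ) ≤ (s-r)+1) (by linarith : (0:ℤ) ≤ 6*b - 4)]

/-- abstract numeric core lemma -/
lemma key_numeric (s q b g : ℕ) (hs : 2 ≤ s) (hq : b + g = q) (h2s : 2*s ≤ q) (hb : 1 ≤ b)
    (nn zz : ℕ → ℕ)
    (hmn : ∀ j j', 1 ≤ j → j ≤ j' → j' ≤ s → nn j' ≤ nn j)
    (hmz : ∀ j j', 1 ≤ j → j ≤ j' → j' ≤ s → zz j' ≤ zz j)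
    (hnzb : ∀ j, 1 ≤ j → j ≤ s → nn j ≤ zz j + b)
    (hzg : ∀ j, 1 ≤ j → j ≤ s → zz j ≤ g)
    (hnq : ∀ j, 1 ≤ j → j ≤ s → nn j ≤ q)
    (hr : ∃ r, 1 ≤ r ∧ r ≤ s ∧ nn r + r ≤ s)
    (hm : ∃ m, 1 ≤ m ∧ m + 1 ≤ s ∧ zz m + m + 1 ≤ s) :
    12 * ∑ j ∈ Icc 1 s, nn j ≤
      6 * ∑ j ∈ Icc 1 s, zz j + 12*(s-1)*b + 6*(s-2)*g + 4*q := by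
  obtain ⟨r, hr1, hrs, hrn⟩ := hr
  rcases eq_or_lt_of_le hrs with hreq | hrlt
  · -- case r = s : use m
    obtain ⟨m, hm1, hms, hmz'⟩ := hm
    subst hreq
    have hns : nn r = 0 := by omega
    set e : ℕ := min g (r - 1 - m) with he
    have hsplit : ∀ j ∈ Icc 1 r, 12 * nn j ≤
        (if j < m then 6 * zz j + (6*b + 6*q)
         else if j < r then 6 * zz j + (12*b + 6*e) else 0) := by
      intro j hj
      simp only [mem_Icc] at hj
      by_cases h1 : j < m
      · simp only [if_pos h1]
        have := hnzb j hj.1 hj.2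
        have := hnq j hj.1 hj.2
        omega
      · simp only [if_neg h1]
        by_cases h2 : j < r
        · simp only [if_pos h2]
          have hz1 : zz j ≤ zz m := hmz m j hm1 (by omega) (by omega)
          have hz2 : zz j ≤ g := hzg j hj.1 hj.2
          have hze : zz j ≤ e := le_min hz2 (by omega)
          have := hnzb j hj.1 hj.2
          omega
        · have hjr : j = r := by omega
          simp only [if_neg h2]
          subst hjr
          omega
    have hsum := Finset.sum_le_sum hsplit
    rw [show (12 * ∑ j ∈ Icc 1 r, nn j) = ∑ j ∈ Icc 1 r, 12 * nn j from (Finset.mul_sum _ _ _)]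
    refine le_trans hsum ?_
    have hsum2 : ∑ j ∈ Icc 1 r, (if j < m then 6 * zz j + (6*b + 6*q)
         else if j < r then 6 * zz j + (12*b + 6*e) else 0)
        ≤ 6 * ∑ j ∈ Icc 1 r, zz j + ((m-1) * (6*b+6*q) + (r-m) * (12*b+6*e)) := by
      have hterm : ∀ j ∈ Icc 1 r, (if j < m then 6 * zz j + (6*b + 6*q)
         else if j < r then 6 * zz j + (12*b + 6*e) else 0) ≤
          6 * zz j + ((if j < m then (6*b+6*q) else 0) + (if m ≤ j ∧ j < r then (12*b+6*e) else 0)) := by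
        intro j hj
        by_cases h1 : j < m
        · simp [h1, show ¬ (m ≤ j ∧ j < r) by omega]
        · by_cases h2 : j < r
          · simp [h1, h2, show (m ≤ j ∧ j < r) by omega]
          · simp [h1, h2, show ¬ (m ≤ j ∧ j < r) by omega]
      refine le_trans (Finset.sum_le_sum hterm) ?_
      rw [Finset.sum_add_distrib, Finset.sum_add_distrib, ← Finset.mul_sum]
      have e1 : (∑ j ∈ Icc 1 r, if j < m then (6*b+6*q) else 0) = (m-1) * (6*b+6*q) := by
        rw [← Finset.sum_filter, Finset.sum_const, smul_eq_mul]
        congr 1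
        rw [show (Icc 1 r).filter (· < m) = Icc 1 (m-1) by ext x; simp only [mem_filter, mem_Icc]; omega,
          Nat.card_Icc]
        omega
      have e2 : (∑ j ∈ Icc 1 r, if m ≤ j ∧ j < r then (12*b+6*e) else 0) = (r-m) * (12*b+6*e) := by
        rw [← Finset.sum_filter, Finset.sum_const, smul_eq_mul]
        congr 1
        rw [show (Icc 1 r).filter (fun j => m ≤ j ∧ j < r) = Icc m (r-1) by
            ext x; simp only [mem_filter, mem_Icc]; omega,
          Nat.card_Icc]
        omega
      rw [e1, e2]
    refine le_trans hsum2 ?_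
    have hfin : (m-1) * (6*b+6*q) + (r-m) * (12*b+6*e) ≤ 12*(r-1)*b + 6*(r-2)*g + 4*q := by
      have he1 : e ≤ g := min_le_left _ _
      have he2 : e + 1 + m ≤ r := by
        have := min_le_right g (r-1-m)
        omega
      have := int_caseA (b:ℤ) g q r r e m (by exact_mod_cast hb) (by exact_mod_cast hq)
        (by exact_mod_cast h2s) (by exact_mod_cast hm1) (by exact_mod_cast hms) rfl
        (by exact_mod_cast he1) (by exact_mod_cast he2) (by positivity) (by positivity)
      have h1 : (1:ℕ) ≤ m := hm1
      have h2 : m ≤ r := by omega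
      have h3 : 1 ≤ r := hr1
      have h4 : 2 ≤ r := hs
      zify [h1, h2, h3, h4]
      linarith [this]
    omega
  · -- case r < s
    have hsplit : ∀ j ∈ Icc 1 s, 12 * nn j ≤
        (if j < r then 6 * zz j + (6*b + 6*q) else 6 * zz j + 12 * (s - r)) := by
      intro j hj
      simp only [mem_Icc] at hj
      by_cases h1 : j < r
      · simp only [if_pos h1]
        have := hnzb j hj.1 hj.2
        have := hnq j hj.1 hj.2
        omega
      · simp only [if_neg h1]
        have : nn j ≤ nn r := hmn r j hr1 (by omega) hj.2
        omega
    have hsum := Finset.sum_le_sum hsplit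
    rw [show (12 * ∑ j ∈ Icc 1 s, nn j) = ∑ j ∈ Icc 1 s, 12 * nn j from (Finset.mul_sum _ _ _)]
    refine le_trans hsum ?_
    have hsum2 : ∑ j ∈ Icc 1 s, (if j < r then 6 * zz j + (6*b + 6*q) else 6 * zz j + 12*(s-r))
        ≤ 6 * ∑ j ∈ Icc 1 s, zz j + ((r-1) * (6*b+6*q) + (s-r+1) * (12*(s-r))) := by
      have hterm : ∀ j ∈ Icc 1 s, (if j < r then 6 * zz j + (6*b + 6*q) else 6 * zz j + 12*(s-r)) ≤
          6 * zz j + ((if j < r then (6*b+6*q) else 0) + (if ¬ (j < r) then 12*(s-r) else 0)) := by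
        intro j hj
        by_cases h1 : j < r <;> simp [h1]
      refine le_trans (Finset.sum_le_sum hterm) ?_
      rw [Finset.sum_add_distrib, Finset.sum_add_distrib, ← Finset.mul_sum]
      have e1 : (∑ j ∈ Icc 1 s, if j < r then (6*b+6*q) else 0) = (r-1) * (6*b+6*q) := by
        rw [← Finset.sum_filter, Finset.sum_const, smul_eq_mul]
        congr 1
        rw [show (Icc 1 s).filter (· < r) = Icc 1 (r-1) by ext x; simp only [mem_filter, mem_Icc]; omega,
          Nat.card_Icc]
        omega
      have e2 : (∑ j ∈ Icc 1 s, if ¬ (j < r) then 12*(s-r) else 0) = (s-r+1) * (12*(s-r)) := by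
        rw [← Finset.sum_filter, Finset.sum_const, smul_eq_mul]
        congr 1
        rw [show (Icc 1 s).filter (fun j => ¬ (j < r)) = Icc r s by
            ext x; simp only [mem_filter, mem_Icc]; omega,
          Nat.card_Icc]
        omega
      rw [e1, e2]
    refine le_trans hsum2 ?_
    have hfin : (r-1) * (6*b+6*q) + (s-r+1)*(12*(s-r)) ≤ 12*(s-1)*b + 6*(s-2)*g + 4*q := by
      have := int_caseB (b:ℤ) g q r s (by exact_mod_cast hb) (by exact_mod_cast hq)
        (by exact_mod_cast h2s) (by exact_mod_cast hr1) (by exact_mod_cast hrlt) (by positivity)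
      have h1 : (1:ℕ) ≤ r := hr1
      have h2 : r ≤ s := by omega
      have h3 : 2 ≤ s := hs
      have h4 : 1 ≤ s := by omega
      zify [h1, h2, h3, h4]
      linarith [this]
    omega

/-- downward greedy system of distinct representatives -/
lemma exists_pick {α : Type*} [DecidableEq α] (p : ℕ) (hp : 1 ≤ p) (filt : ℕ → Finset α)
    (h : ∀ j, 1 ≤ j → j ≤ p → p + 1 ≤ (filt j).card + j) :
    ∃ f : ℕ → α, (∀ j, 1 ≤ j → j ≤ p → f j ∈ filt j) ∧
      (∀ j j', 1 ≤ j → j ≤ p → 1 ≤ j' → j' ≤ p → j ≠ j' → f j ≠ f j') := by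
  have hne : (filt p).Nonempty := by
    have := h p hp le_rfl
    exact Finset.card_pos.mp (by omega)
  obtain ⟨a0, _⟩ := hne
  -- auxiliary: for all c ≤ p, a partial choice on Ioc (p-c) p
  have aux : ∀ c, c ≤ p → ∃ f : ℕ → α,
      (∀ j, p - c < j → j ≤ p → f j ∈ filt j) ∧
      (∀ j j', p - c < j → j ≤ p → p - c < j' → j' ≤ p → j ≠ j' → f j ≠ f j') := by
    intro c
    induction c with
    | zero =>
      intro _
      exact ⟨fun _ => a0, by intro j hj1 hj2; omega, by intro j j' hj1 hj2; omega⟩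
    | succ c ih =>
      intro hc
      obtain ⟨f, hf1, hf2⟩ := ih (by omega)
      set j0 : ℕ := p - c with hj0
      have hj01 : 1 ≤ j0 := by omega
      have hcard : c + 1 ≤ (filt j0).card := by
        have := h j0 hj01 (by omega)
        omega
      have himg : ((Ioc (p - c) p).image f).card ≤ c := by
        refine le_trans (Finset.card_image_le) ?_
        rw [Nat.card_Ioc]
        omega
      have hav : (filt j0 \ ((Ioc (p - c) p).image f)).Nonempty := by
        rw [← Finset.card_pos]
        have := Finset.le_card_sdiff ((Ioc (p - c) p).image f) (filt j0)
        omega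
      obtain ⟨a, ha⟩ := hav
      rw [Finset.mem_sdiff] at ha
      refine ⟨Function.update f j0 a, ?_, ?_⟩
      · intro j hj1 hj2
        rcases eq_or_ne j j0 with rfl | hne
        · rw [Function.update_self]; exact ha.1
        · rw [Function.update_of_ne hne]
          exact hf1 j (by omega) hj2
      · intro j j' hj1 hj2 hj1' hj2' hjj
        rcases eq_or_ne j j0 with rfl | hne
        · rw [Function.update_self, Function.update_of_ne (by omega)]
          intro hcon
          exact ha.2 (Finset.mem_image.mpr ⟨j', by simp only [Finset.mem_Ioc]; omega, hcon.symm⟩)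
        · rw [Function.update_of_ne hne]
          rcases eq_or_ne j' j0 with rfl | hne'
          · rw [Function.update_self]
            intro hcon
            exact ha.2 (Finset.mem_image.mpr ⟨j, by simp only [Finset.mem_Ioc]; omega, hcon⟩)
          · rw [Function.update_of_ne hne']
            exact hf2 j j' (by omega) hj2 (by omega) hj2' hjj
  obtain ⟨f, hf1, hf2⟩ := aux p le_rfl
  exact ⟨f, fun j h1 h2 => hf1 j (by omega) h2,
    fun j j' h1 h2 h1' h2' => hf2 j j' (by omega) h2 (by omega) h2'⟩

/-- a permutation mapping one finset onto another of the same size -/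
lemma exists_perm_image {α : Type*} [Fintype α] [DecidableEq α] (A B : Finset α)
    (h : A.card = B.card) : ∃ τ : Equiv.Perm α, A.image τ = B := by
  have hc : Fintype.card {x // x ∈ A} = Fintype.card {x // x ∈ B} := by
    simp [Fintype.card_coe, h]
  have hc' : Fintype.card {x // x ∉ A} = Fintype.card {x // x ∉ B} := by
    have h1 := Fintype.card_subtype_compl (fun x => x ∈ A)
    have h2 := Fintype.card_subtype_compl (fun x => x ∈ B)
    rw [h1, h2, hc]
  let e1 : {x // x ∈ A} ≃ {x // x ∈ B} := Fintype.equivOfCardEq hc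
  let e2 : {x // x ∉ A} ≃ {x // x ∉ B} := Fintype.equivOfCardEq hc'
  let τ : Equiv.Perm α :=
    ((Equiv.sumCompl (· ∈ A)).symm.trans (Equiv.sumCongr e1 e2)).trans (Equiv.sumCompl (· ∈ B))
  refine ⟨τ, ?_⟩
  have hsub : A.image τ ⊆ B := by
    intro y hy
    rw [Finset.mem_image] at hy
    obtain ⟨x, hx, rfl⟩ := hy
    have : τ x = (e1 ⟨x, hx⟩ : α) := by
      simp only [τ, Equiv.trans_apply, Equiv.sumCompl_symm_apply_of_pos hx,
        Equiv.sumCongr_apply, Sum.map_inl, Equiv.sumCompl_apply_inl]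
    rw [this]
    exact (e1 ⟨x, hx⟩).2
  have hcard : (A.image τ).card = B.card := by
    rw [Finset.card_image_of_injective _ τ.injective, h]
  exact Finset.eq_of_subset_of_card_le hsub (le_of_eq hcard.symm)

section counting

variable {w k1 : ℕ} (ιe : Fin w ↪ ℕ)

/-- pullback of a subset of the image -/
lemma image_filter_preimage (V : Finset ℕ) (hι : (univ : Finset (Fin w)).image ιe = V)
    (T : Finset ℕ) (hT : T ⊆ V) :
    ((univ : Finset (Fin w)).filter (fun x => ιe x ∈ T)).image ιe = T := by
  apply Finset.Subset.antisymm
  · intro y hy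
    rw [Finset.mem_image] at hy
    obtain ⟨x, hx, rfl⟩ := hy
    exact (Finset.mem_filter.mp hx).2
  · intro y hy
    have : y ∈ V := hT hy
    rw [← hι, Finset.mem_image] at this
    obtain ⟨x, _, rfl⟩ := this
    exact Finset.mem_image.mpr ⟨x, Finset.mem_filter.mpr ⟨Finset.mem_univ x, hy⟩, rfl⟩

lemma card_filter_preimage (V : Finset ℕ) (hι : (univ : Finset (Fin w)).image ιe = V)
    (T : Finset ℕ) (hT : T ⊆ V) :
    ((univ : Finset (Fin w)).filter (fun x => ιe x ∈ T)).card = T.card := by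
  conv_rhs => rw [← image_filter_preimage ιe V hι T hT]
  rw [Finset.card_image_of_injective _ ιe.injective]

lemma block_eq_iff (V : Finset ℕ) (hι : (univ : Finset (Fin w)).image ιe = V)
    (X : Finset (Fin w)) (T : Finset ℕ) (hT : T ⊆ V) :
    X.image ιe = T ↔ X = (univ : Finset (Fin w)).filter (fun x => ιe x ∈ T) := by
  constructor
  · rintro rfl
    apply Finset.Subset.antisymm
    · intro x hx
      exact Finset.mem_filter.mpr ⟨Finset.mem_univ x, Finset.mem_image_of_mem _ hx⟩
    · intro x hx
      have hx2 := (Finset.mem_filter.mp hx).2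
      rw [Finset.mem_image] at hx2
      obtain ⟨x', hx', hee⟩ := hx2
      rwa [← ιe.injective hee]
  · rintro rfl
    exact image_filter_preimage ιe V hι T hT

/-- the fiber counts are constant -/
lemma fiber_const (I : Finset (Fin w)) (V : Finset ℕ)
    (hι : (univ : Finset (Fin w)).image ιe = V)
    (T T' : Finset ℕ) (hT : T ⊆ V) (hT' : T' ⊆ V) (hc : T.card = T'.card) :
    ((univ : Finset (Equiv.Perm (Fin w))).filter (fun σ : Equiv.Perm (Fin w) => (I.image σ).image ιe = T)).card =
    ((univ : Finset (Equiv.Perm (Fin w))).filter (fun σ : Equiv.Perm (Fin w) => (I.image σ).image ιe = T')).card := by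
  set Th := (univ : Finset (Fin w)).filter (fun x => ιe x ∈ T) with hTh
  set Th' := (univ : Finset (Fin w)).filter (fun x => ιe x ∈ T') with hTh'
  have hchat : Th.card = Th'.card := by
    rw [card_filter_preimage ιe V hι T hT, card_filter_preimage ιe V hι T' hT', hc]
  obtain ⟨τ, hτ⟩ := exists_perm_image Th Th' hchat
  apply Finset.card_bij' (fun σ _ => τ * σ) (fun σ _ => τ⁻¹ * σ)
  · intro σ hσ
    rw [Finset.mem_filter] at hσ ⊢
    refine ⟨Finset.mem_univ _, ?_⟩
    rw [block_eq_iff ιe V hι _ _ hT'] 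
    rw [block_eq_iff ιe V hι _ _ hT] at hσ
    rw [show ⇑(τ * σ) = ⇑τ ∘ ⇑σ from rfl, ← Finset.image_image, hσ.2]
    exact hτ
  · intro σ hσ
    rw [Finset.mem_filter] at hσ ⊢
    refine ⟨Finset.mem_univ _, ?_⟩
    rw [block_eq_iff ιe V hι _ _ hT]
    rw [block_eq_iff ιe V hι _ _ hT'] at hσ
    rw [show ⇑(τ⁻¹ * σ) = ⇑τ⁻¹ ∘ ⇑σ from rfl, ← Finset.image_image, hσ.2]
    have hτ2 : Th'.image ⇑τ⁻¹ = Th := by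
      rw [← hτ, Finset.image_image]
      have hid : ⇑τ⁻¹ ∘ ⇑τ = id := by funext x; simp
      rw [hid, Finset.image_id]
    exact hτ2
  · intro σ _; group
  · intro σ _; group

/-- main counting identity -/
lemma cnt_key (V : Finset ℕ) (hι : (univ : Finset (Fin w)).image ιe = V)
    (I : Finset (Fin w)) (hI : I.card = k1) (hkw : k1 ≤ w)
    (K : Finset (Finset ℕ)) :
    (powersetCard k1 V).card *
      ((univ : Finset (Equiv.Perm (Fin w))).filter (fun σ : Equiv.Perm (Fin w) => (I.image σ).image ιe ∈ K)).card
    = (Fintype.card (Equiv.Perm (Fin w))) * ((powersetCard k1 V).filter (· ∈ K)).card := by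
  have hVw : V.card = w := by
    rw [← hι, Finset.card_image_of_injective _ ιe.injective, Finset.card_univ, Fintype.card_fin]
  have hBmem : ∀ σ : Equiv.Perm (Fin w), (I.image σ).image ιe ∈ powersetCard k1 V := by
    intro σ
    rw [Finset.mem_powersetCard]
    constructor
    · intro y hy
      rw [Finset.mem_image] at hy
      obtain ⟨x, _, rfl⟩ := hy
      rw [← hι]
      exact Finset.mem_image_of_mem _ (Finset.mem_univ _)
    · rw [Finset.card_image_of_injective _ ιe.injective,
        Finset.card_image_of_injective _ σ.injective, hI]
  -- existence of a base point
  have hPne : (powersetCard k1 V).Nonempty := by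
    rw [Finset.powersetCard_nonempty]  
    rw [hVw]; exact hkw
  obtain ⟨T0, hT0⟩ := hPne
  have hT0V : T0 ⊆ V := (Finset.mem_powersetCard.mp hT0).1
  have hT0c : T0.card = k1 := (Finset.mem_powersetCard.mp hT0).2
  set fib : Finset ℕ → ℕ :=
    fun T => ((univ : Finset (Equiv.Perm (Fin w))).filter (fun σ : Equiv.Perm (Fin w) => (I.image σ).image ιe = T)).card
    with hfib
  have hconst : ∀ T ∈ powersetCard k1 V, fib T = fib T0 := by
    intro T hT
    rw [Finset.mem_powersetCard] at hT
    exact fiber_const ιe I V hι T T0 hT.1 hT0V (by rw [hT.2, hT0c])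
  -- partition of the filtered set
  have hpart : ((univ : Finset (Equiv.Perm (Fin w))).filter (fun σ : Equiv.Perm (Fin w) => (I.image σ).image ιe ∈ K)).card
      = ∑ T ∈ (powersetCard k1 V).filter (· ∈ K), fib T := by
    rw [Finset.card_eq_sum_card_fiberwise
      (f := fun σ : Equiv.Perm (Fin w) => (I.image σ).image ιe)
      (t := (powersetCard k1 V).filter (· ∈ K))
      (fun σ hσ => Finset.mem_filter.mpr ⟨hBmem σ, (Finset.mem_filter.mp hσ).2⟩)]
    apply Finset.sum_congr rfl
    intro T hT
    congr 1
    ext σ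
    simp only [Finset.mem_filter, Finset.mem_univ, true_and]
    constructor
    · rintro ⟨_, h2⟩; exact h2
    · rintro rfl; exact ⟨(Finset.mem_filter.mp hT).2, rfl⟩
  have hall : Fintype.card (Equiv.Perm (Fin w)) = ∑ T ∈ powersetCard k1 V, fib T := by
    rw [← Finset.card_univ]
    exact Finset.card_eq_sum_card_fiberwise
      (f := fun σ : Equiv.Perm (Fin w) => (I.image σ).image ιe)
      (t := powersetCard k1 V) (fun σ _ => hBmem σ)
  rw [hpart, hall]
  rw [Finset.sum_congr rfl hconst,
    Finset.sum_congr rfl (fun T hT => hconst T (Finset.mem_filter.mp hT).1)]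
  rw [Finset.sum_const, Finset.sum_const, smul_eq_mul, smul_eq_mul]
  ring

end counting

lemma matching_le (G : Finset (Finset ℕ)) (s : ℕ) (hν : matchingNumber G ≤ s)
    (M : Finset (Finset ℕ)) (hMG : M ⊆ G)
    (hdis : ∀ A ∈ M, ∀ B ∈ M, A ≠ B → Disjoint A B) : M.card ≤ s := by
  refine le_trans ?_ hν
  exact Finset.le_sup (f := Finset.card)
    (Finset.mem_filter.mpr ⟨Finset.mem_powerset.mpr hMG, hdis⟩)

/-- THE STAR LEMMA -/
lemma star_lemma (k s n : ℕ) (hk : 3 ≤ k) (hs : 2 ≤ s)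
    (G : Finset (Finset ℕ)) (hν : matchingNumber G ≤ s)
    (H : ℕ → Finset (Finset ℕ))
    (hHsub : ∀ j, 1 ≤ j → j ≤ s → ∀ T ∈ H j, T ⊆ Icc (s+1) n ∧ T.card = k-1)
    (hHG : ∀ j, 1 ≤ j → j ≤ s → ∀ T ∈ H j, insert j T ∈ G)
    (hHmono : ∀ j j', 1 ≤ j' → j' ≤ j → j ≤ s → H j ⊆ H j')
    (E F : Finset ℕ) (hEG : E ∈ G) (hFG : F ∈ G) (hEF : Disjoint E F)
    (hEsub : E ⊆ Icc (s+1) n) (hFsub : F ⊆ Icc (s+1) n)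
    (hEk : E.card = k) (hFk : F.card = k)
    (hsn : 2*s*(k-1) + s + k ≤ n) :
    12 * (∑ j ∈ Icc 1 s, ((H j).filter (fun T => Disjoint T E)).card)
        + (12*(s-1)) * ((n-s-2*k).choose (k-1))
      ≤ 6 * (∑ j ∈ Icc 1 s, ((H j).filter (fun T => Disjoint T E ∧ Disjoint T F)).card)
        + (12*(s-1) + 4) * ((n-s-k).choose (k-1)) + (6*(s-2)) * ((n-s-2*k).choose (k-1)) := by
  classical
  set k1 := k - 1 with hk1def
  have hk1 : 1 ≤ k1 := by omega
  set V : Finset ℕ := (Icc (s+1) n) \ E with hVdef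
  have hIccCard : (Icc (s+1) n).card = n - s := by
    rw [Nat.card_Icc]; omega
  have hVcard : V.card = n - s - k := by
    rw [hVdef, Finset.card_sdiff_of_subset hEsub, hIccCard, hEk]
  set w := n - s - k with hwdef
  have hwlb : 2*s*k1 ≤ w := by omega
  have hwk : k ≤ w := by
    have h1 : 2*s*k1 ≥ 2*2*k1 := by
      apply Nat.mul_le_mul_right; omega
    omega
  set q := w / k1 with hqdef
  have hq2s : 2*s ≤ q := by
    rw [hqdef, Nat.le_div_iff_mul_le (by omega : 0 < k1)]
    exact hwlb
  have hqk : q * k1 ≤ w := by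
    rw [hqdef, Nat.mul_comm]; exact Nat.mul_div_le w k1
  have hmod : w - q * k1 < k1 := by
    have h1 := Nat.div_add_mod w k1
    have h2 := Nat.mod_lt w (show 0 < k1 by omega)
    have h3 : q * k1 = k1 * (w / k1) := by rw [hqdef, Nat.mul_comm]
    omega
  -- enumeration of V
  have hVw : V.card = w := hVcard
  set ιe : Fin w ↪ ℕ := (V.orderEmbOfFin hVw).toEmbedding with hιdef
  have hιuniv : (univ : Finset (Fin w)).image ιe = V := by
    apply Finset.eq_of_subset_of_card_le
    · intro y hy
      rw [Finset.mem_image] at hy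
      obtain ⟨x, _, rfl⟩ := hy
      exact Finset.orderEmbOfFin_mem V hVw x
    · rw [Finset.card_image_of_injective _ ιe.injective, Finset.card_univ, Fintype.card_fin, hVw]
  -- blocks
  set Ib : ℕ → Finset (Fin w) :=
    fun b => univ.filter (fun x : Fin w => b*k1 ≤ x.val ∧ x.val < b*k1 + k1) with hIbdef
  have hIbcard : ∀ b, b < q → (Ib b).card = k1 := by
    intro b hb
    have hlt : ∀ m ∈ Finset.Ico (b*k1) (b*k1+k1), m < w := by
      intro m hm
      rw [Finset.mem_Ico] at hm
      have : (b+1)*k1 ≤ q*k1 := Nat.mul_le_mul_right _ (by omega)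
      have := hqk
      nlinarith [hm.2]
    have : Ib b = Finset.attachFin (Finset.Ico (b*k1) (b*k1+k1)) hlt := by
      ext x
      rw [hIbdef]
      simp only [Finset.mem_filter, Finset.mem_univ, true_and, Finset.mem_attachFin,
        Finset.mem_Ico]
    rw [this, Finset.card_attachFin, Nat.card_Ico]
    omega
  have hIbdis : ∀ b b', b < b' → Disjoint (Ib b) (Ib b') := by
    intro b b' hbb
    rw [Finset.disjoint_left]
    intro x hx hx'
    rw [hIbdef] at hx hx'
    simp only [Finset.mem_filter, Finset.mem_univ, true_and] at hx hx'
    have : (b+1)*k1 ≤ b'*k1 := Nat.mul_le_mul_right _ (by omega)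
    nlinarith [hx.2, hx'.1]
  set Bk : ℕ → Equiv.Perm (Fin w) → Finset ℕ :=
    fun b σ => ((Ib b).image σ).image ιe with hBkdef
  have hBsub : ∀ b σ, Bk b σ ⊆ V := by
    intro b σ y hy
    rw [hBkdef] at hy
    simp only [Finset.mem_image] at hy
    obtain ⟨x, _, rfl⟩ := hy
    rw [← hιuniv]
    exact Finset.mem_image_of_mem _ (Finset.mem_univ _)
  have hBcard : ∀ b σ, b < q → (Bk b σ).card = k1 := by
    intro b σ hb
    rw [hBkdef]
    simp only
    rw [Finset.card_image_of_injective _ ιe.injective,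
      Finset.card_image_of_injective _ σ.injective, hIbcard b hb]
  have hBdis : ∀ b b' σ, b ≠ b' → Disjoint (Bk b σ) (Bk b' σ) := by
    intro b b' σ hbb
    have key : ∀ c c', c < c' → Disjoint (Bk c σ) (Bk c' σ) := by
      intro c c' hcc
      rw [Finset.disjoint_left]
      intro y hy hy'
      rw [hBkdef] at hy hy'
      simp only [Finset.mem_image] at hy hy'
      obtain ⟨x, ⟨x1, hx1, rfl⟩, hxy⟩ := hy
      obtain ⟨x', ⟨x1', hx1', rfl⟩, hxy'⟩ := hy'
      have : σ x1 = σ x1' := ιe.injective (hxy.trans hxy'.symm)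
      have hx11 : x1 = x1' := σ.injective this
      subst hx11
      exact (Finset.disjoint_left.mp (hIbdis c c' hcc)) hx1 hx1'
    rcases lt_or_gt_of_ne hbb with h | h
    · exact key _ _ h
    · exact (key _ _ h).symm
  have hBIcc : ∀ b σ, Bk b σ ⊆ Icc (s+1) n := by
    intro b σ
    refine subset_trans (hBsub b σ) ?_
    rw [hVdef]; exact Finset.sdiff_subset
  have hBE : ∀ b σ, Disjoint (Bk b σ) E := by
    intro b σ
    rw [Finset.disjoint_left]
    intro y hy
    have := hBsub b σ hy
    rw [hVdef, Finset.mem_sdiff] at this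
    exact this.2
  have hFV : F ⊆ V := by
    intro y hy
    rw [hVdef, Finset.mem_sdiff]
    exact ⟨hFsub hy, fun hcon => (Finset.disjoint_left.mp hEF) hcon hy⟩
  have hEne : E.Nonempty := by
    rw [← Finset.card_pos, hEk]; omega
  have hENF : E ≠ F := by
    intro hcon
    rw [hcon] at hEne hEF
    obtain ⟨x, hx⟩ := hEne
    exact (Finset.disjoint_left.mp hEF) hx hx
  -- the members of H give sets in G
  have hGmem : ∀ j σ b, 1 ≤ j → j ≤ s → Bk b σ ∈ H j → insert j (Bk b σ) ∈ G := by
    intro j σ b h1 h2 h3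
    exact hHG j h1 h2 _ h3
  -- self-contained disjointness of the matching members
  have hIns : ∀ j j' σ (bb bb' : ℕ), 1 ≤ j → j ≤ s → 1 ≤ j' → j' ≤ s → j ≠ j' → bb ≠ bb' →
      Disjoint (insert j (Bk bb σ)) (insert j' (Bk bb' σ)) := by
    intro j j' σ bb bb' h1 h2 h1' h2' hjj hbb
    rw [Finset.disjoint_left]
    intro x hx hx'
    rw [Finset.mem_insert] at hx hx'
    rcases hx with rfl | hx
    · rcases hx' with h | h
      · exact hjj h
      · have := hBIcc bb' σ h
        rw [Finset.mem_Icc] at this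
        omega
    · rcases hx' with rfl | h
      · have := hBIcc bb σ hx
        rw [Finset.mem_Icc] at this
        omega
      · exact (Finset.disjoint_left.mp (hBdis bb bb' σ hbb)) hx h
  have hInsE : ∀ j σ bb, 1 ≤ j → j ≤ s → Disjoint E (insert j (Bk bb σ)) := by
    intro j σ bb h1 h2
    rw [Finset.disjoint_left]
    intro x hx hx'
    rw [Finset.mem_insert] at hx'
    rcases hx' with rfl | hx'
    · have := hEsub hx
      rw [Finset.mem_Icc] at this
      omega
    · exact (Finset.disjoint_left.mp (hBE bb σ)) hx' hx
  have hInsF : ∀ j σ bb, 1 ≤ j → j ≤ s → Disjoint (Bk bb σ) F → Disjoint F (insert j (Bk bb σ)) := by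
    intro j σ bb h1 h2 hdisj
    rw [Finset.disjoint_left]
    intro x hx hx'
    rw [Finset.mem_insert] at hx'
    rcases hx' with rfl | hx'
    · have := hFsub hx
      rw [Finset.mem_Icc] at this
      omega
    · exact (Finset.disjoint_left.mp hdisj) hx' hx
  -- per-permutation block counts
  set nn : ℕ → Equiv.Perm (Fin w) → ℕ :=
    fun j σ => ((range q).filter (fun b => Bk b σ ∈ H j)).card with hnndef
  set zz : ℕ → Equiv.Perm (Fin w) → ℕ :=
    fun j σ => ((range q).filter (fun b => Bk b σ ∈ H j ∧ Disjoint (Bk b σ) F)).card with hzzdef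
  set bb : Equiv.Perm (Fin w) → ℕ :=
    fun σ => ((range q).filter (fun b => ¬ Disjoint (Bk b σ) F)).card with hbbdef
  set gg : Equiv.Perm (Fin w) → ℕ :=
    fun σ => ((range q).filter (fun b => Disjoint (Bk b σ) F)).card with hggdef
  -- existence of r
  have hrex : ∀ σ, ∃ r, 1 ≤ r ∧ r ≤ s ∧ nn r σ + r ≤ s := by
    intro σ
    by_contra hcon
    push_neg at hcon
    obtain ⟨f, hf1, hf2⟩ := exists_pick s (by omega)
      (fun j => (range q).filter (fun b => Bk b σ ∈ H j))
      (by
        intro j h1 h2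
        have h3 := hcon j h1 h2
        have h4 : nn j σ = ((range q).filter (fun b => Bk b σ ∈ H j)).card := rfl
        show s + 1 ≤ ((range q).filter (fun b => Bk b σ ∈ H j)).card + j
        omega)
    set M : Finset (Finset ℕ) :=
      insert E ((Icc 1 s).image (fun j => insert j (Bk (f j) σ))) with hMdef
    have hfH : ∀ j, 1 ≤ j → j ≤ s → Bk (f j) σ ∈ H j := by
      intro j h1 h2
      have := hf1 j h1 h2
      rw [Finset.mem_filter] at this
      exact this.2
    have hMG : M ⊆ G := by
      intro A hA
      rw [hMdef, Finset.mem_insert] at hA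
      rcases hA with rfl | hA
      · exact hEG
      · rw [Finset.mem_image] at hA
        obtain ⟨j, hj, rfl⟩ := hA
        rw [Finset.mem_Icc] at hj
        exact hGmem j σ (f j) hj.1 hj.2 (hfH j hj.1 hj.2)
    have hMdis : ∀ A ∈ M, ∀ B ∈ M, A ≠ B → Disjoint A B := by
      intro A hA B hB hAB
      rw [hMdef, Finset.mem_insert] at hA hB
      rcases hA with rfl | hA
      · rcases hB with rfl | hB
        · exact absurd rfl hAB
        · rw [Finset.mem_image] at hB
          obtain ⟨j, hj, rfl⟩ := hB
          rw [Finset.mem_Icc] at hj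
          exact hInsE j σ (f j) hj.1 hj.2
      · rcases hB with rfl | hB
        · rw [Finset.mem_image] at hA
          obtain ⟨j, hj, rfl⟩ := hA
          rw [Finset.mem_Icc] at hj
          exact (hInsE j σ (f j) hj.1 hj.2).symm
        · rw [Finset.mem_image] at hA hB
          obtain ⟨j, hj, rfl⟩ := hA
          obtain ⟨j', hj', rfl⟩ := hB
          rw [Finset.mem_Icc] at hj hj'
          have hjj : j ≠ j' := by
            intro hcon2
            subst hcon2
            exact hAB rfl
          exact hIns j j' σ (f j) (f j') hj.1 hj.2 hj'.1 hj'.2 hjj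
            (hf2 j j' hj.1 hj.2 hj'.1 hj'.2 hjj)
    have hEnotmem : E ∉ (Icc 1 s).image (fun j => insert j (Bk (f j) σ)) := by
      intro hcon2
      rw [Finset.mem_image] at hcon2
      obtain ⟨j, hj, hcon3⟩ := hcon2
      rw [Finset.mem_Icc] at hj
      have : j ∈ E := by
        rw [← hcon3]
        exact Finset.mem_insert_self _ _
      have := hEsub this
      rw [Finset.mem_Icc] at this
      omega
    have hinj : Set.InjOn (fun j => insert j (Bk (f j) σ)) (Icc 1 s) := by
      intro j hj j' hj' heq
      have heq' : insert j (Bk (f j) σ) = insert j' (Bk (f j') σ) := heq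
      rw [Finset.coe_Icc, Set.mem_Icc] at hj hj'
      by_contra hne
      have hjmem : j ∈ insert j' (Bk (f j') σ) := by
        rw [← heq']
        exact Finset.mem_insert_self _ _
      rw [Finset.mem_insert] at hjmem
      rcases hjmem with h | h
      · exact hne h
      · have := hBIcc (f j') σ h
        rw [Finset.mem_Icc] at this
        omega
    have hMcard : M.card = s + 1 := by
      rw [hMdef, Finset.card_insert_of_notMem hEnotmem,
        Finset.card_image_of_injOn hinj, Nat.card_Icc]
      omega
    have := matching_le G s hν M hMG hMdis
    omega
  -- existence of m
  have hmex : ∀ σ, ∃ m, 1 ≤ m ∧ m + 1 ≤ s ∧ zz m σ + m + 1 ≤ s := by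
    intro σ
    by_contra hcon
    push_neg at hcon
    obtain ⟨f, hf1, hf2⟩ := exists_pick (s-1) (by omega)
      (fun j => (range q).filter (fun b => Bk b σ ∈ H j ∧ Disjoint (Bk b σ) F))
      (by
        intro j h1 h2
        have h3 := hcon j h1 (by omega)
        have h4 : zz j σ = ((range q).filter
            (fun b => Bk b σ ∈ H j ∧ Disjoint (Bk b σ) F)).card := rfl
        show s - 1 + 1 ≤ ((range q).filter
            (fun b => Bk b σ ∈ H j ∧ Disjoint (Bk b σ) F)).card + j
        omega)
    set M : Finset (Finset ℕ) :=
      insert E (insert F ((Icc 1 (s-1)).image (fun j => insert j (Bk (f j) σ)))) with hMdef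
    have hfH : ∀ j, 1 ≤ j → j ≤ s - 1 →
        Bk (f j) σ ∈ H j ∧ Disjoint (Bk (f j) σ) F := by
      intro j h1 h2
      have := hf1 j h1 h2
      rw [Finset.mem_filter] at this
      exact this.2
    have hMG : M ⊆ G := by
      intro A hA
      rw [hMdef, Finset.mem_insert, Finset.mem_insert] at hA
      rcases hA with rfl | hA
      · exact hEG
      rcases hA with rfl | hA
      · exact hFG
      rw [Finset.mem_image] at hA
      obtain ⟨j, hj, rfl⟩ := hA
      rw [Finset.mem_Icc] at hj
      exact hGmem j σ (f j) hj.1 (by omega) (hfH j hj.1 hj.2).1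
    have hFnotmem : F ∉ (Icc 1 (s-1)).image (fun j => insert j (Bk (f j) σ)) := by
      intro hcon2
      rw [Finset.mem_image] at hcon2
      obtain ⟨j, hj, hcon3⟩ := hcon2
      rw [Finset.mem_Icc] at hj
      have : j ∈ F := by
        rw [← hcon3]
        exact Finset.mem_insert_self _ _
      have := hFsub this
      rw [Finset.mem_Icc] at this
      omega
    have hEnotmem : E ∉ (Icc 1 (s-1)).image (fun j => insert j (Bk (f j) σ)) := by
      intro hcon2
      rw [Finset.mem_image] at hcon2
      obtain ⟨j, hj, hcon3⟩ := hcon2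
      rw [Finset.mem_Icc] at hj
      have : j ∈ E := by
        rw [← hcon3]
        exact Finset.mem_insert_self _ _
      have := hEsub this
      rw [Finset.mem_Icc] at this
      omega
    have hMdis : ∀ A ∈ M, ∀ B ∈ M, A ≠ B → Disjoint A B := by
      intro A hA B hB hAB
      rw [hMdef, Finset.mem_insert, Finset.mem_insert] at hA hB
      have himg : ∀ C, C ∈ (Icc 1 (s-1)).image (fun j => insert j (Bk (f j) σ)) →
          ∃ j, 1 ≤ j ∧ j ≤ s - 1 ∧ C = insert j (Bk (f j) σ) := by
        intro C hC
        rw [Finset.mem_image] at hC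
        obtain ⟨j, hj, rfl⟩ := hC
        rw [Finset.mem_Icc] at hj
        exact ⟨j, hj.1, hj.2, rfl⟩
      rcases hA with rfl | hA
      · rcases hB with rfl | hB
        · exact absurd rfl hAB
        rcases hB with rfl | hB
        · exact hEF
        obtain ⟨j, h1, h2, rfl⟩ := himg B hB
        exact hInsE j σ (f j) h1 (by omega)
      rcases hA with rfl | hA
      · rcases hB with rfl | hB
        · exact hEF.symm
        rcases hB with rfl | hB
        · exact absurd rfl hAB
        obtain ⟨j, h1, h2, rfl⟩ := himg B hB
        exact hInsF j σ (f j) h1 (by omega) (hfH j h1 h2).2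
      obtain ⟨j, h1, h2, rfl⟩ := himg A hA
      rcases hB with rfl | hB
      · exact (hInsE j σ (f j) h1 (by omega)).symm
      rcases hB with rfl | hB
      · exact (hInsF j σ (f j) h1 (by omega) (hfH j h1 h2).2).symm
      obtain ⟨j', h1', h2', rfl⟩ := himg B hB
      have hjj : j ≠ j' := by
        intro hcon2
        subst hcon2
        exact hAB rfl
      exact hIns j j' σ (f j) (f j') h1 (by omega) h1' (by omega) hjj
        (hf2 j j' h1 h2 h1' h2' hjj)
    have hinj : Set.InjOn (fun j => insert j (Bk (f j) σ)) (Icc 1 (s-1)) := by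
      intro j hj j' hj' heq
      have heq' : insert j (Bk (f j) σ) = insert j' (Bk (f j') σ) := heq
      rw [Finset.coe_Icc, Set.mem_Icc] at hj hj'
      by_contra hne
      have hjmem : j ∈ insert j' (Bk (f j') σ) := by
        rw [← heq']
        exact Finset.mem_insert_self _ _
      rw [Finset.mem_insert] at hjmem
      rcases hjmem with h | h
      · exact hne h
      · have := hBIcc (f j') σ h
        rw [Finset.mem_Icc] at this
        omega
    have hMcard : M.card = s + 1 := by
      rw [hMdef, Finset.card_insert_of_notMem (by
          rw [Finset.mem_insert]
          push_neg
          exact ⟨hENF, hEnotmem⟩),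
        Finset.card_insert_of_notMem hFnotmem,
        Finset.card_image_of_injOn hinj, Nat.card_Icc]
      omega
    have := matching_le G s hν M hMG hMdis
    omega
  -- pointwise inequality
  have hPW : ∀ σ : Equiv.Perm (Fin w), 12 * ∑ j ∈ Icc 1 s, nn j σ ≤
      6 * ∑ j ∈ Icc 1 s, zz j σ + 12*(s-1)*(bb σ) + 6*(s-2)*(gg σ) + 4*q := by
    intro σ
    have hqsum : bb σ + gg σ = q := by
      have e1 : bb σ = ((range q).filter (fun b => ¬ Disjoint (Bk b σ) F)).card := rfl
      have e2 : gg σ = ((range q).filter (fun b => Disjoint (Bk b σ) F)).card := rfl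
      have h2 := Finset.card_filter_add_card_filter_not
        (s := range q) (p := fun b => Disjoint (Bk b σ) F)
      rw [Finset.card_range] at h2
      omega
    have hbpos : 1 ≤ bb σ := by
      by_contra hcon
      have hzero : ((range q).filter (fun b => ¬ Disjoint (Bk b σ) F)) = ∅ := by
        rw [← Finset.card_eq_zero]
        have e1 : bb σ = ((range q).filter (fun b => ¬ Disjoint (Bk b σ) F)).card := rfl
        omega
      have halldis : ∀ b ∈ range q, Disjoint (Bk b σ) F := by
        intro b hbmem
        by_contra hcon2
        have : b ∈ (range q).filter (fun b => ¬ Disjoint (Bk b σ) F) :=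
          Finset.mem_filter.mpr ⟨hbmem, hcon2⟩
        rw [hzero] at this
        exact absurd this (Finset.notMem_empty b)
      set U : Finset ℕ := (range q).biUnion (fun b => Bk b σ) with hUdef
      have hUcard : U.card = q * k1 := by
        rw [hUdef, Finset.card_biUnion (by
          intro b hb b' hb' hbb
          exact hBdis b b' σ hbb)]
        rw [Finset.sum_congr rfl (fun b hbmem => hBcard b σ (Finset.mem_range.mp hbmem))]
        rw [Finset.sum_const, Finset.card_range, smul_eq_mul]
      have hUV : U ⊆ V := by
        intro x hx
        rw [hUdef, Finset.mem_biUnion] at hx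
        obtain ⟨b, _, hx⟩ := hx
        exact hBsub b σ hx
      have hFVU : F ⊆ V \ U := by
        intro x hx
        rw [Finset.mem_sdiff]
        refine ⟨hFV hx, ?_⟩
        intro hcon2
        rw [hUdef, Finset.mem_biUnion] at hcon2
        obtain ⟨b, hbmem, hcon3⟩ := hcon2
        exact (Finset.disjoint_left.mp (halldis b hbmem)) hcon3 hx
      have hcard := Finset.card_le_card hFVU
      rw [Finset.card_sdiff_of_subset hUV, hFk, hUcard, hVw] at hcard
      omega
    refine key_numeric s q (bb σ) (gg σ) hs hqsum hq2s hbpos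
      (fun j => nn j σ) (fun j => zz j σ) ?_ ?_ ?_ ?_ ?_ (hrex σ) (hmex σ)
    · intro j j' h1 h2 h3
      rw [hnndef]
      apply Finset.card_le_card
      intro b hbm
      rw [Finset.mem_filter] at hbm ⊢
      exact ⟨hbm.1, hHmono j' j h1 h2 h3 hbm.2⟩
    · intro j j' h1 h2 h3
      rw [hzzdef]
      apply Finset.card_le_card
      intro b hbm
      rw [Finset.mem_filter] at hbm ⊢
      exact ⟨hbm.1, hHmono j' j h1 h2 h3 hbm.2.1, hbm.2.2⟩
    · intro j h1 h2
      rw [hnndef, hzzdef, hbbdef]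
      have hsubs : (range q).filter (fun b => Bk b σ ∈ H j) ⊆
          ((range q).filter (fun b => Bk b σ ∈ H j ∧ Disjoint (Bk b σ) F)) ∪
          ((range q).filter (fun b => ¬ Disjoint (Bk b σ) F)) := by
        intro b hbm
        rw [Finset.mem_filter] at hbm
        rw [Finset.mem_union, Finset.mem_filter, Finset.mem_filter]
        by_cases hd : Disjoint (Bk b σ) F
        · exact Or.inl ⟨hbm.1, hbm.2, hd⟩
        · exact Or.inr ⟨hbm.1, hd⟩
      calc ((range q).filter (fun b => Bk b σ ∈ H j)).card
          ≤ _ := Finset.card_le_card hsubs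
        _ ≤ _ := Finset.card_union_le _ _
    · intro j h1 h2
      rw [hzzdef, hggdef]
      apply Finset.card_le_card
      intro b hbm
      rw [Finset.mem_filter] at hbm ⊢
      exact ⟨hbm.1, hbm.2.2⟩
    · intro j h1 h2
      rw [hnndef]
      calc ((range q).filter (fun b => Bk b σ ∈ H j)).card
          ≤ (range q).card := Finset.card_le_card (Finset.filter_subset _ _)
        _ = q := Finset.card_range q
  -- global counting objects
  set TT := powersetCard k1 V with hTTdef
  set t := TT.card with htdef
  set NP := Fintype.card (Equiv.Perm (Fin w)) with hNPdef
  have hteval : t = (n-s-k).choose k1 := by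
    rw [htdef, hTTdef, Finset.card_powersetCard, hVw]
  have hBmemTT : ∀ b σ, b < q → Bk b σ ∈ TT := by
    intro b σ hb
    rw [hTTdef, Finset.mem_powersetCard]
    exact ⟨hBsub b σ, hBcard b σ hb⟩
  have hIdgen : ∀ (K : Finset (Finset ℕ)) (b : ℕ), b < q →
      t * ((univ : Finset (Equiv.Perm (Fin w))).filter (fun σ => Bk b σ ∈ K)).card
        = NP * (TT.filter (· ∈ K)).card := by
    intro K b hb
    have h1 := cnt_key (k1 := k1) ιe V hιuniv (Ib b) (hIbcard b hb) (by omega : k1 ≤ w) K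
    have h3 : ((univ : Finset (Equiv.Perm (Fin w))).filter (fun σ => Bk b σ ∈ K)) =
        ((univ : Finset (Equiv.Perm (Fin w))).filter
          (fun σ : Equiv.Perm (Fin w) => ((Ib b).image σ).image ιe ∈ K)) := rfl
    rw [h3, htdef, hTTdef]
    exact h1
  -- family identifications
  have hKEeq : ∀ j, 1 ≤ j → j ≤ s →
      TT.filter (· ∈ H j) = (H j).filter (fun T => Disjoint T E) := by
    intro j h1 h2
    ext T
    rw [hTTdef, Finset.mem_filter, Finset.mem_filter, Finset.mem_powersetCard]
    constructor
    · rintro ⟨⟨hTV, _⟩, hTH⟩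
      refine ⟨hTH, Finset.disjoint_left.mpr ?_⟩
      intro x hx
      have := hTV hx
      rw [hVdef, Finset.mem_sdiff] at this
      exact this.2
    · rintro ⟨hTH, hdisj⟩
      obtain ⟨hTsub, hTcard⟩ := hHsub j h1 h2 T hTH
      refine ⟨⟨?_, hTcard⟩, hTH⟩
      intro x hx
      rw [hVdef, Finset.mem_sdiff]
      exact ⟨hTsub hx, Finset.disjoint_left.mp hdisj hx⟩
  have hKEFeq : ∀ j, 1 ≤ j → j ≤ s →
      TT.filter (· ∈ (H j).filter (fun T => Disjoint T F))
        = (H j).filter (fun T => Disjoint T E ∧ Disjoint T F) := by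
    intro j h1 h2
    ext T
    rw [hTTdef, Finset.mem_filter, Finset.mem_filter, Finset.mem_powersetCard,
      Finset.mem_filter]
    constructor
    · rintro ⟨⟨hTV, _⟩, hTH, hTF⟩
      refine ⟨hTH, Finset.disjoint_left.mpr ?_, hTF⟩
      intro x hx
      have := hTV hx
      rw [hVdef, Finset.mem_sdiff] at this
      exact this.2
    · rintro ⟨hTH, hdisjE, hdisjF⟩
      obtain ⟨hTsub, hTcard⟩ := hHsub j h1 h2 T hTH
      refine ⟨⟨?_, hTcard⟩, hTH, hdisjF⟩
      intro x hx
      rw [hVdef, Finset.mem_sdiff]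
      exact ⟨hTsub hx, Finset.disjoint_left.mp hdisjE hx⟩
  set Kb := TT.filter (fun T => ¬ Disjoint T F) with hKbdef
  set Kg := TT.filter (fun T => Disjoint T F) with hKgdef
  have hKbTT : TT.filter (· ∈ Kb) = Kb := by
    ext T
    rw [Finset.mem_filter]
    constructor
    · rintro ⟨_, h⟩; exact h
    · intro h
      refine ⟨?_, h⟩
      rw [hKbdef, Finset.mem_filter] at h
      exact h.1
  have hKgTT : TT.filter (· ∈ Kg) = Kg := by
    ext T
    rw [Finset.mem_filter]
    constructor
    · rintro ⟨_, h⟩; exact h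
    · intro h
      refine ⟨?_, h⟩
      rw [hKgdef, Finset.mem_filter] at h
      exact h.1
  have hKgcard : Kg.card = (n-s-2*k).choose k1 := by
    have : Kg = powersetCard k1 (V \ F) := by
      ext T
      rw [hKgdef, Finset.mem_filter, hTTdef, Finset.mem_powersetCard, Finset.mem_powersetCard]
      constructor
      · rintro ⟨⟨hTV, hTc⟩, hTF⟩
        refine ⟨?_, hTc⟩
        intro x hx
        rw [Finset.mem_sdiff]
        exact ⟨hTV hx, Finset.disjoint_left.mp hTF hx⟩
      · rintro ⟨hTVF, hTc⟩
        refine ⟨⟨?_, hTc⟩, Finset.disjoint_left.mpr ?_⟩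
        · intro x hx
          exact (Finset.mem_sdiff.mp (hTVF hx)).1
        · intro x hx
          exact (Finset.mem_sdiff.mp (hTVF hx)).2
    rw [this, Finset.card_powersetCard, Finset.card_sdiff_of_subset hFV, hVw, hFk]
    congr 1
    omega
  have hKbg : Kg.card + Kb.card = t := by
    rw [hKgdef, hKbdef, htdef]
    exact Finset.card_filter_add_card_filter_not (p := fun T => Disjoint T F)
  -- summed identities
  have hTSn : ∀ j, 1 ≤ j → j ≤ s →
      t * (∑ σ : Equiv.Perm (Fin w), nn j σ)
        = (q * NP) * ((H j).filter (fun T => Disjoint T E)).card := by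
    intro j h1 h2
    have hstep : (∑ σ : Equiv.Perm (Fin w), nn j σ)
        = ∑ b ∈ range q,
          ((univ : Finset (Equiv.Perm (Fin w))).filter (fun σ => Bk b σ ∈ H j)).card := by
      have e1 : ∀ σ : Equiv.Perm (Fin w), nn j σ
          = ∑ b ∈ range q, if Bk b σ ∈ H j then 1 else 0 := by
        intro σ
        rw [show nn j σ = ((range q).filter (fun b => Bk b σ ∈ H j)).card from rfl,
          Finset.card_filter]
      rw [Finset.sum_congr rfl (fun σ _ => e1 σ), Finset.sum_comm]
      exact Finset.sum_congr rfl (fun b _ => (Finset.card_filter _ _).symm)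
    rw [hstep, Finset.mul_sum]
    rw [Finset.sum_congr rfl (fun b hb => hIdgen (H j) b (Finset.mem_range.mp hb))]
    rw [Finset.sum_const, Finset.card_range, smul_eq_mul, hKEeq j h1 h2]
    ring
  have hTSz : ∀ j, 1 ≤ j → j ≤ s →
      t * (∑ σ : Equiv.Perm (Fin w), zz j σ)
        = (q * NP) * ((H j).filter (fun T => Disjoint T E ∧ Disjoint T F)).card := by
    intro j h1 h2
    have hfe : ∀ b ∈ range q,
        ((univ : Finset (Equiv.Perm (Fin w))).filter
          (fun σ => Bk b σ ∈ H j ∧ Disjoint (Bk b σ) F))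
        = ((univ : Finset (Equiv.Perm (Fin w))).filter
          (fun σ => Bk b σ ∈ (H j).filter (fun T => Disjoint T F))) := by
      intro b _
      apply Finset.filter_congr
      intro σ _
      rw [Finset.mem_filter]
    have hstep : (∑ σ : Equiv.Perm (Fin w), zz j σ)
        = ∑ b ∈ range q,
          ((univ : Finset (Equiv.Perm (Fin w))).filter
            (fun σ => Bk b σ ∈ (H j).filter (fun T => Disjoint T F))).card := by
      have e1 : ∀ σ : Equiv.Perm (Fin w), zz j σ
          = ∑ b ∈ range q, if (Bk b σ ∈ H j ∧ Disjoint (Bk b σ) F) then 1 else 0 := by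
        intro σ
        rw [show zz j σ = ((range q).filter
            (fun b => Bk b σ ∈ H j ∧ Disjoint (Bk b σ) F)).card from rfl,
          Finset.card_filter]
      rw [Finset.sum_congr rfl (fun σ _ => e1 σ), Finset.sum_comm]
      refine Finset.sum_congr rfl (fun b hb => ?_)
      rw [← hfe b hb]
      exact (Finset.card_filter _ _).symm
    rw [hstep, Finset.mul_sum]
    rw [Finset.sum_congr rfl (fun b hb =>
      hIdgen ((H j).filter (fun T => Disjoint T F)) b (Finset.mem_range.mp hb))]
    rw [Finset.sum_const, Finset.card_range, smul_eq_mul, hKEFeq j h1 h2]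
    ring
  have hTSb : t * (∑ σ : Equiv.Perm (Fin w), bb σ) = (q * NP) * Kb.card := by
    have hfe : ∀ b ∈ range q,
        ((univ : Finset (Equiv.Perm (Fin w))).filter (fun σ => ¬ Disjoint (Bk b σ) F))
        = ((univ : Finset (Equiv.Perm (Fin w))).filter (fun σ => Bk b σ ∈ Kb)) := by
      intro b hb
      apply Finset.filter_congr
      intro σ _
      rw [hKbdef, Finset.mem_filter]
      constructor
      · intro h; exact ⟨hBmemTT b σ (Finset.mem_range.mp hb), h⟩
      · intro h; exact h.2
    have hstep : (∑ σ : Equiv.Perm (Fin w), bb σ)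
        = ∑ b ∈ range q,
          ((univ : Finset (Equiv.Perm (Fin w))).filter (fun σ => Bk b σ ∈ Kb)).card := by
      have e1 : ∀ σ : Equiv.Perm (Fin w), bb σ
          = ∑ b ∈ range q, if ¬ Disjoint (Bk b σ) F then 1 else 0 := by
        intro σ
        rw [show bb σ = ((range q).filter (fun b => ¬ Disjoint (Bk b σ) F)).card from rfl,
          Finset.card_filter]
      rw [Finset.sum_congr rfl (fun σ _ => e1 σ), Finset.sum_comm]
      refine Finset.sum_congr rfl (fun b hb => ?_)
      rw [← hfe b hb]
      exact (Finset.card_filter _ _).symm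
    rw [hstep, Finset.mul_sum]
    rw [Finset.sum_congr rfl (fun b hb => hIdgen Kb b (Finset.mem_range.mp hb))]
    rw [Finset.sum_const, Finset.card_range, smul_eq_mul, hKbTT]
    ring
  have hTSg : t * (∑ σ : Equiv.Perm (Fin w), gg σ) = (q * NP) * Kg.card := by
    have hfe : ∀ b ∈ range q,
        ((univ : Finset (Equiv.Perm (Fin w))).filter (fun σ => Disjoint (Bk b σ) F))
        = ((univ : Finset (Equiv.Perm (Fin w))).filter (fun σ => Bk b σ ∈ Kg)) := by
      intro b hb
      apply Finset.filter_congr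
      intro σ _
      rw [hKgdef, Finset.mem_filter]
      constructor
      · intro h; exact ⟨hBmemTT b σ (Finset.mem_range.mp hb), h⟩
      · intro h; exact h.2
    have hstep : (∑ σ : Equiv.Perm (Fin w), gg σ)
        = ∑ b ∈ range q,
          ((univ : Finset (Equiv.Perm (Fin w))).filter (fun σ => Bk b σ ∈ Kg)).card := by
      have e1 : ∀ σ : Equiv.Perm (Fin w), gg σ
          = ∑ b ∈ range q, if Disjoint (Bk b σ) F then 1 else 0 := by
        intro σ
        rw [show gg σ = ((range q).filter (fun b => Disjoint (Bk b σ) F)).card from rfl,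
          Finset.card_filter]
      rw [Finset.sum_congr rfl (fun σ _ => e1 σ), Finset.sum_comm]
      refine Finset.sum_congr rfl (fun b hb => ?_)
      rw [← hfe b hb]
      exact (Finset.card_filter _ _).symm
    rw [hstep, Finset.mul_sum]
    rw [Finset.sum_congr rfl (fun b hb => hIdgen Kg b (Finset.mem_range.mp hb))]
    rw [Finset.sum_const, Finset.card_range, smul_eq_mul, hKgTT]
    ring
  -- sum the pointwise inequality
  set A := ∑ j ∈ Icc 1 s, ((H j).filter (fun T => Disjoint T E)).card with hAdef
  set Z := ∑ j ∈ Icc 1 s, ((H j).filter (fun T => Disjoint T E ∧ Disjoint T F)).card with hZdef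
  have hSn : t * (∑ σ : Equiv.Perm (Fin w), ∑ j ∈ Icc 1 s, nn j σ) = (q * NP) * A := by
    rw [Finset.sum_comm, Finset.mul_sum, hAdef, Finset.mul_sum]
    refine Finset.sum_congr rfl (fun j hj => ?_)
    rw [Finset.mem_Icc] at hj
    exact hTSn j hj.1 hj.2
  have hSz : t * (∑ σ : Equiv.Perm (Fin w), ∑ j ∈ Icc 1 s, zz j σ) = (q * NP) * Z := by
    rw [Finset.sum_comm, Finset.mul_sum, hZdef, Finset.mul_sum]
    refine Finset.sum_congr rfl (fun j hj => ?_)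
    rw [Finset.mem_Icc] at hj
    exact hTSz j hj.1 hj.2
  have hsumineq : 12 * (∑ σ : Equiv.Perm (Fin w), ∑ j ∈ Icc 1 s, nn j σ) ≤
      6 * (∑ σ : Equiv.Perm (Fin w), ∑ j ∈ Icc 1 s, zz j σ)
      + 12*(s-1) * (∑ σ : Equiv.Perm (Fin w), bb σ)
      + 6*(s-2) * (∑ σ : Equiv.Perm (Fin w), gg σ)
      + NP * (4*q) := by
    have h := Finset.sum_le_sum (s := (univ : Finset (Equiv.Perm (Fin w))))
      (fun σ _ => hPW σ)
    calc 12 * (∑ σ : Equiv.Perm (Fin w), ∑ j ∈ Icc 1 s, nn j σ)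
        = ∑ σ : Equiv.Perm (Fin w), 12 * ∑ j ∈ Icc 1 s, nn j σ := by
          rw [Finset.mul_sum]
      _ ≤ ∑ σ : Equiv.Perm (Fin w), (6 * ∑ j ∈ Icc 1 s, zz j σ
            + 12*(s-1)*(bb σ) + 6*(s-2)*(gg σ) + 4*q) := h
      _ = 6 * (∑ σ : Equiv.Perm (Fin w), ∑ j ∈ Icc 1 s, zz j σ)
          + 12*(s-1) * (∑ σ : Equiv.Perm (Fin w), bb σ)
          + 6*(s-2) * (∑ σ : Equiv.Perm (Fin w), gg σ)
          + NP * (4*q) := by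
          rw [Finset.sum_add_distrib, Finset.sum_add_distrib, Finset.sum_add_distrib,
            Finset.sum_const, ← Finset.mul_sum, ← Finset.mul_sum, ← Finset.mul_sum,
            Finset.card_univ, smul_eq_mul]
  -- multiply by t and cancel
  have hqNPpos : 0 < q * NP := by
    have h1 : 0 < q := by omega
    have h2 : 0 < NP := Fintype.card_pos
    exact Nat.mul_pos h1 h2
  have hkey : 12 * A ≤ 6 * Z + 12*(s-1)*Kb.card + 6*(s-2)*Kg.card + 4*t := by
    refine Nat.le_of_mul_le_mul_left ?_ hqNPpos
    calc (q*NP) * (12 * A) = 12 * ((q*NP) * A) := by ring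
      _ = 12 * (t * (∑ σ : Equiv.Perm (Fin w), ∑ j ∈ Icc 1 s, nn j σ)) := by rw [hSn]
      _ = t * (12 * (∑ σ : Equiv.Perm (Fin w), ∑ j ∈ Icc 1 s, nn j σ)) := by ring
      _ ≤ t * (6 * (∑ σ : Equiv.Perm (Fin w), ∑ j ∈ Icc 1 s, zz j σ)
          + 12*(s-1) * (∑ σ : Equiv.Perm (Fin w), bb σ)
          + 6*(s-2) * (∑ σ : Equiv.Perm (Fin w), gg σ)
          + NP * (4*q)) := Nat.mul_le_mul_left t hsumineq
      _ = 6 * (t * (∑ σ : Equiv.Perm (Fin w), ∑ j ∈ Icc 1 s, zz j σ))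
          + 12*(s-1) * (t * (∑ σ : Equiv.Perm (Fin w), bb σ))
          + 6*(s-2) * (t * (∑ σ : Equiv.Perm (Fin w), gg σ))
          + t * (NP * (4*q)) := by ring
      _ = 6 * ((q*NP) * Z) + 12*(s-1) * ((q*NP) * Kb.card)
          + 6*(s-2) * ((q*NP) * Kg.card) + t * (NP * (4*q)) := by rw [hSz, hTSb, hTSg]
      _ = (q*NP) * (6 * Z + 12*(s-1)*Kb.card + 6*(s-2)*Kg.card + 4*t) := by ring
  -- conclude
  rw [← hteval, ← hKgcard]
  have hmulid : 12*(s-1)*Kb.card + 12*(s-1)*Kg.card = 12*(s-1)*t := by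
    rw [← Nat.mul_add, Nat.add_comm Kb.card, hKbg]
  have hexp : (12*(s-1) + 4) * t = 12*(s-1)*t + 4*t := by ring
  linarith [hkey, hmulid, hexp]

section slices

variable (k s n : ℕ) (G : Finset (Finset ℕ))

/-- basic properties of the singleton slices -/
lemma slice_props (hG : ∀ A ∈ G, A ⊆ Icc 1 n ∧ A.card = k) (j : ℕ) (h1 : 1 ≤ j) (h2 : j ≤ s)
    (T : Finset ℕ) (hT : T ∈ famSlice G ({j} : Finset ℕ) s) :
    T ⊆ Icc (s+1) n ∧ T.card = k - 1 ∧ insert j T ∈ G := by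
  rw [famSlice, Finset.mem_image] at hT
  obtain ⟨A, hA, rfl⟩ := hT
  rw [Finset.mem_filter] at hA
  obtain ⟨hAG, hAint⟩ := hA
  have hjA : j ∈ A := by
    have : j ∈ A ∩ Icc 1 s := by rw [hAint]; exact Finset.mem_singleton_self j
    exact (Finset.mem_inter.mp this).1
  obtain ⟨hAsub, hAcard⟩ := hG A hAG
  have hsd : A \ {j} = A.erase j := by rw [Finset.erase_eq]
  constructor
  · intro x hx
    rw [Finset.mem_sdiff, Finset.mem_singleton] at hx
    obtain ⟨hxA, hxj⟩ := hx
    have hx1 := hAsub hxA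
    rw [Finset.mem_Icc] at hx1 ⊢
    by_contra hcon
    push_neg at hcon
    have hxs : x ∈ A ∩ Icc 1 s := by
      rw [Finset.mem_inter, Finset.mem_Icc]
      exact ⟨hxA, hx1.1, by omega⟩
    rw [hAint, Finset.mem_singleton] at hxs
    exact hxj hxs
  constructor
  · rw [hsd, Finset.card_erase_of_mem hjA, hAcard]
  · rw [hsd, Finset.insert_erase hjA]
    exact hAG

lemma slice_mem (hG : ∀ A ∈ G, A ⊆ Icc 1 n ∧ A.card = k) (j : ℕ) (h1 : 1 ≤ j) (h2 : j ≤ s)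
    (hsn : s ≤ n)
    (T : Finset ℕ) (hTsub : T ⊆ Icc (s+1) n) (hTG : insert j T ∈ G) :
    T ∈ famSlice G ({j} : Finset ℕ) s := by
  have hjT : j ∉ T := by
    intro hcon
    have := hTsub hcon
    rw [Finset.mem_Icc] at this
    omega
  rw [famSlice, Finset.mem_image]
  refine ⟨insert j T, ?_, ?_⟩
  · rw [Finset.mem_filter]
    refine ⟨hTG, ?_⟩
    ext x
    rw [Finset.mem_inter, Finset.mem_insert, Finset.mem_singleton, Finset.mem_Icc]
    constructor
    · rintro ⟨h3 | h3, h4, h5⟩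
      · exact h3
      · have := hTsub h3
        rw [Finset.mem_Icc] at this
        omega
    · rintro rfl
      exact ⟨Or.inl rfl, h1, h2⟩
  · rw [← Finset.erase_eq, Finset.erase_insert hjT]

lemma slice_mono (hG : ∀ A ∈ G, A ⊆ Icc 1 n ∧ A.card = k) (hshift : IsShifted n G)
    (hsn : s ≤ n) (j j' : ℕ) (h1 : 1 ≤ j') (h2 : j' ≤ j) (h3 : j ≤ s) :
    famSlice G ({j} : Finset ℕ) s ⊆ famSlice G ({j'} : Finset ℕ) s := by
  rcases eq_or_lt_of_le h2 with rfl | hlt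
  · exact subset_rfl
  intro T hT
  obtain ⟨hTsub, hTcard, hTG⟩ := slice_props k s n G hG j (by omega) h3 T hT
  have hjT : j ∉ T := by
    intro hcon
    have := hTsub hcon
    rw [Finset.mem_Icc] at this
    omega
  have hj'mem : j' ∉ insert j T := by
    rw [Finset.mem_insert]
    push_neg
    constructor
    · omega
    · intro hcon
      have := hTsub hcon
      rw [Finset.mem_Icc] at this
      omega
  have hshifted := hshift j' j h1 hlt (by omega) (insert j T) hTG
    (Finset.mem_insert_self j T) hj'mem
  rw [Finset.erase_insert hjT] at hshifted
  exact slice_mem k s n G hG j' h1 (by omega) hsn T hTsub hshifted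

end slices

/-- Lemma 8 (i): `x = 2`, `γ = 4/3`, `u ≥ 3`. -/
theorem lemma_8_i (k s : ℕ) (hk : 3 ≤ k) (hs : 2 ≤ s)
    (u : ℝ) (hu3 : 3 ≤ u) (hu : (s : ℝ) + 1 ≤ u)
    (n : ℕ) (hn : (n : ℝ) = (u + (s : ℝ)) * ((k : ℝ) - 1) + (s : ℝ) + 1)
    (G : Finset (Finset ℕ)) (hG : ∀ A ∈ G, A ⊆ Finset.Icc 1 n ∧ A.card = k)
    (hshift : IsShifted n G) (hν : matchingNumber G ≤ s)
    (hmatch : 2 ≤ matchingNumber (famSlice G (∅ : Finset ℕ) s)) :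
    ∑ i ∈ Finset.Icc 1 s, ((famSlice G ({i} : Finset ℕ) s).card : ℝ) ≤
      (s : ℝ) * ((n - s).choose (k - 1) : ℝ)
        - (4 / 3) * ((n - k - s).choose (k - 1) : ℝ) := by
  classical
  -- size facts
  have hsn : 2*s*(k-1) + s + k ≤ n := by
    have hreal : ((2*s*(k-1) + s + k : ℕ) : ℝ) ≤ (n : ℝ) := by
      rw [hn]
      push_cast [Nat.cast_sub (show 1 ≤ k by omega)]
      have hk1 : (1:ℝ) ≤ (k:ℝ) := by exact_mod_cast (show (1:ℕ) ≤ k by omega)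
      nlinarith [hu, hk1]
    exact_mod_cast hreal
  have hsn' : s ≤ n := by omega
  -- extract E F
  obtain ⟨M, hMmem, hMsup⟩ := Finset.exists_mem_eq_sup
    ((famSlice G (∅ : Finset ℕ) s).powerset.filter
      fun M => ∀ A ∈ M, ∀ B ∈ M, A ≠ B → Disjoint A B)
    ⟨∅, by
      rw [Finset.mem_filter]
      exact ⟨Finset.empty_mem_powerset _, by intro A hA; exact absurd hA (Finset.notMem_empty A)⟩⟩
    Finset.card
  rw [Finset.mem_filter, Finset.mem_powerset] at hMmem
  obtain ⟨hMsub, hMdis⟩ := hMmem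
  have hM2 : 1 < M.card := by
    have : matchingNumber (famSlice G (∅ : Finset ℕ) s) = M.card := hMsup
    omega
  obtain ⟨E, hEM, F, hFM, hEFne⟩ := Finset.one_lt_card.mp hM2
  have hEdis : Disjoint E F := hMdis E hEM F hFM hEFne
  have hmemG : ∀ X ∈ M, X ∈ G ∧ X ∩ Icc 1 s = ∅ := by
    intro X hX
    have := hMsub hX
    rw [famSlice, Finset.mem_image] at this
    obtain ⟨A, hA, rfl⟩ := this
    rw [Finset.mem_filter] at hA
    rw [Finset.sdiff_empty]
    exact ⟨hA.1, hA.2⟩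
  obtain ⟨hEG, hEint⟩ := hmemG E hEM
  obtain ⟨hFG, hFint⟩ := hmemG F hFM
  have hsubIcc : ∀ X, X ∈ G → X ∩ Icc 1 s = ∅ → X ⊆ Icc (s+1) n := by
    intro X hXG hXint x hx
    have h1 := (hG X hXG).1 hx
    rw [Finset.mem_Icc] at h1 ⊢
    by_contra hcon
    push_neg at hcon
    have : x ∈ X ∩ Icc 1 s := by
      rw [Finset.mem_inter, Finset.mem_Icc]
      exact ⟨hx, h1.1, by omega⟩
    rw [hXint] at this
    exact absurd this (Finset.notMem_empty x)
  have hEsub : E ⊆ Icc (s+1) n := hsubIcc E hEG hEint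
  have hFsub : F ⊆ Icc (s+1) n := hsubIcc F hFG hFint
  have hEk : E.card = k := (hG E hEG).2
  have hFk : F.card = k := (hG F hFG).2
  -- the slice families
  set H : ℕ → Finset (Finset ℕ) := fun i => famSlice G ({i} : Finset ℕ) s with hHdef
  have hHsub : ∀ j, 1 ≤ j → j ≤ s → ∀ T ∈ H j, T ⊆ Icc (s+1) n ∧ T.card = k-1 := by
    intro j h1 h2 T hT
    have := slice_props k s n G hG j h1 h2 T hT
    exact ⟨this.1, this.2.1⟩
  have hHG' : ∀ j, 1 ≤ j → j ≤ s → ∀ T ∈ H j, insert j T ∈ G := by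
    intro j h1 h2 T hT
    exact (slice_props k s n G hG j h1 h2 T hT).2.2
  have hHmono : ∀ j j', 1 ≤ j' → j' ≤ j → j ≤ s → H j ⊆ H j' :=
    fun j j' h1 h2 h3 => slice_mono k s n G hG hshift hsn' j j' h1 h2 h3
  -- apply the star lemma both ways
  have S1 := star_lemma k s n hk hs G hν H hHsub hHG' hHmono E F hEG hFG hEdis
    hEsub hFsub hEk hFk hsn
  have S2 := star_lemma k s n hk hs G hν H hHsub hHG' hHmono F E hFG hEG hEdis.symm
    hFsub hEsub hFk hEk hsn
  -- swap the conjunction in S2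
  have hswap : ∀ j, ((H j).filter (fun T => Disjoint T F ∧ Disjoint T E))
      = ((H j).filter (fun T => Disjoint T E ∧ Disjoint T F)) := by
    intro j
    apply Finset.filter_congr
    intro T _
    constructor
    · rintro ⟨a, b⟩; exact ⟨b, a⟩
    · rintro ⟨a, b⟩; exact ⟨b, a⟩
  have hZeq : (∑ j ∈ Icc 1 s, ((H j).filter (fun T => Disjoint T F ∧ Disjoint T E)).card)
      = ∑ j ∈ Icc 1 s, ((H j).filter (fun T => Disjoint T E ∧ Disjoint T F)).card :=
    Finset.sum_congr rfl (fun j _ => by rw [hswap j])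
  rw [hZeq] at S2
  -- counting in the big family
  set TT := powersetCard (k-1) (Icc (s+1) n) with hTTdef
  have hIccCard : (Icc (s+1) n).card = n - s := by rw [Nat.card_Icc]; omega
  set Cval := TT.card with hCdef
  have hCeval : Cval = (n-s).choose (k-1) := by
    rw [hCdef, hTTdef, Finset.card_powersetCard, hIccCard]
  set tval := (n-s-k).choose (k-1) with htvaldef
  set t2val := (n-s-2*k).choose (k-1) with ht2valdef
  have hfiltercard : ∀ (X : Finset ℕ), X ⊆ Icc (s+1) n →
      (TT.filter (fun T => Disjoint T X)).card = ((n-s) - X.card).choose (k-1) := by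
    intro X hX
    have heq : TT.filter (fun T => Disjoint T X) = powersetCard (k-1) (Icc (s+1) n \ X) := by
      ext T
      rw [hTTdef, Finset.mem_filter, Finset.mem_powersetCard, Finset.mem_powersetCard]
      constructor
      · rintro ⟨⟨hT1, hT2⟩, hT3⟩
        refine ⟨?_, hT2⟩
        intro x hx
        rw [Finset.mem_sdiff]
        exact ⟨hT1 hx, Finset.disjoint_left.mp hT3 hx⟩
      · rintro ⟨hT1, hT2⟩
        refine ⟨⟨?_, hT2⟩, Finset.disjoint_left.mpr ?_⟩
        · intro x hx; exact (Finset.mem_sdiff.mp (hT1 hx)).1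
        · intro x hx; exact (Finset.mem_sdiff.mp (hT1 hx)).2
    rw [heq, Finset.card_powersetCard, Finset.card_sdiff_of_subset hX, hIccCard]
  have htE : (TT.filter (fun T => Disjoint T E)).card = tval := by
    rw [hfiltercard E hEsub, hEk, htvaldef]
  have htF : (TT.filter (fun T => Disjoint T F)).card = tval := by
    rw [hfiltercard F hFsub, hFk, htvaldef]
  have htEF : (TT.filter (fun T => Disjoint T E ∧ Disjoint T F)).card = t2val := by
    have heq : TT.filter (fun T => Disjoint T E ∧ Disjoint T F)
        = TT.filter (fun T => Disjoint T (E ∪ F)) := by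
      apply Finset.filter_congr
      intro T _
      rw [Finset.disjoint_union_right]
    rw [heq, hfiltercard (E ∪ F) (Finset.union_subset hEsub hFsub),
      Finset.card_union_of_disjoint hEdis, hEk, hFk, ht2valdef]
    congr 1
    omega
  set U := (TT.filter (fun T => Disjoint T E ∨ Disjoint T F)).card with hUdef
  have hUid : U + t2val = tval + tval := by
    have h := Finset.card_union_add_card_inter
      (TT.filter (fun T => Disjoint T E)) (TT.filter (fun T => Disjoint T F))
    rw [← Finset.filter_or, ← Finset.filter_and] at h
    rw [hUdef]
    omega
  -- per-slice decomposition
  have hHTT : ∀ j, 1 ≤ j → j ≤ s → H j ⊆ TT := by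
    intro j h1 h2 T hT
    rw [hTTdef, Finset.mem_powersetCard]
    obtain ⟨ha, hb⟩ := hHsub j h1 h2 T hT
    exact ⟨ha, hb⟩
  have hdec : ∀ j, 1 ≤ j → j ≤ s → (H j).card + U ≤ Cval
      + ((H j).filter (fun T => Disjoint T E ∨ Disjoint T F)).card := by
    intro j h1 h2
    have e1 := Finset.card_filter_add_card_filter_not
      (s := H j) (p := fun T => Disjoint T E ∨ Disjoint T F)
    have e2 : ((H j).filter (fun T => ¬(Disjoint T E ∨ Disjoint T F))).card ≤
        (TT.filter (fun T => ¬(Disjoint T E ∨ Disjoint T F))).card :=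
      Finset.card_le_card (Finset.filter_subset_filter _ (hHTT j h1 h2))
    have e3 := Finset.card_filter_add_card_filter_not
      (s := TT) (p := fun T => Disjoint T E ∨ Disjoint T F)
    omega
  have hPj : ∀ j, 1 ≤ j → j ≤ s →
      ((H j).filter (fun T => Disjoint T E ∨ Disjoint T F)).card
        + ((H j).filter (fun T => Disjoint T E ∧ Disjoint T F)).card
      = ((H j).filter (fun T => Disjoint T E)).card
        + ((H j).filter (fun T => Disjoint T F)).card := by
    intro j h1 h2
    rw [Finset.filter_or, Finset.filter_and]
    exact Finset.card_union_add_card_inter _ _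
  -- sum over j
  set SH := ∑ j ∈ Icc 1 s, (H j).card with hSHdef
  set PP := ∑ j ∈ Icc 1 s, ((H j).filter (fun T => Disjoint T E ∨ Disjoint T F)).card with hPPdef
  set ZZ := ∑ j ∈ Icc 1 s, ((H j).filter (fun T => Disjoint T E ∧ Disjoint T F)).card with hZZdef
  set AE := ∑ j ∈ Icc 1 s, ((H j).filter (fun T => Disjoint T E)).card with hAEdef
  set AF := ∑ j ∈ Icc 1 s, ((H j).filter (fun T => Disjoint T F)).card with hAFdef
  have hcardIcc : (Icc 1 s).card = s := by rw [Nat.card_Icc]; omega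
  have hdecS : SH + s * U ≤ s * Cval + PP := by
    have h : (∑ j ∈ Icc 1 s, ((H j).card + U))
        ≤ ∑ j ∈ Icc 1 s,
            (Cval + ((H j).filter (fun T => Disjoint T E ∨ Disjoint T F)).card) :=
      Finset.sum_le_sum (fun j hj => by
        rw [Finset.mem_Icc] at hj
        exact hdec j hj.1 hj.2)
    rw [Finset.sum_add_distrib, Finset.sum_add_distrib, Finset.sum_const, Finset.sum_const,
      hcardIcc, smul_eq_mul, smul_eq_mul] at h
    rw [hSHdef, hPPdef]
    omega
  have hPS : PP + ZZ = AE + AF := by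
    have h : (∑ j ∈ Icc 1 s, (((H j).filter (fun T => Disjoint T E ∨ Disjoint T F)).card
          + ((H j).filter (fun T => Disjoint T E ∧ Disjoint T F)).card))
        = ∑ j ∈ Icc 1 s, (((H j).filter (fun T => Disjoint T E)).card
          + ((H j).filter (fun T => Disjoint T F)).card) :=
      Finset.sum_congr rfl (fun j hj => by
        rw [Finset.mem_Icc] at hj
        exact hPj j hj.1 hj.2)
    rw [Finset.sum_add_distrib, Finset.sum_add_distrib] at h
    exact h
  -- final numeric combination
  have goalN : 12 * SH + 16 * tval ≤ 12 * (s * Cval) := by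
    have h1s : (1:ℕ) ≤ s := by omega
    have h2s : (2:ℕ) ≤ s := hs
    zify [h1s, h2s] at S1 S2 hdecS hPS hUid ⊢
    have h3s : (s:ℤ) * U + s * t2val = s * (tval + tval) := by
      linear_combination (s:ℤ) * hUid
    linarith [S1, S2, hdecS, hPS, h3s]
  -- cast to the reals
  have hnks : n - k - s = n - s - k := by omega
  rw [hnks]
  have hcast : (SH : ℝ) = ∑ i ∈ Icc 1 s, ((famSlice G ({i} : Finset ℕ) s).card : ℝ) := by
    rw [hSHdef]
    push_cast
    rfl
  have gR : (12:ℝ) * (SH : ℝ) + 16 * (tval : ℝ) ≤ 12 * ((s:ℝ) * (Cval : ℝ)) := by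
    exact_mod_cast goalN
  rw [← hcast]
  rw [hCeval, htvaldef] at gR
  push_cast at gR ⊢
  linarith [gR]
end

section
/- Let F ⊆ 2^[n] be an up-set and suppose that for some integer k with 1 ≤ k ≤ n one has |F| = ∑_{i=k}^{n} C(n,i). Then the immediate shadow satisfies |∂F| ≥ ∑_{i=k−1}^{n−1} C(n,i), with equality if and only if F = {A ⊆ [n] : |A| ≥ k}. -/
open Finset FinsetFamily

namespace UpsetShadow

/-- Sum of binomial coefficients `C(n,j) + ... + C(n,n)`. -/
def T (n j : ℕ) : ℕ := ∑ i ∈ Finset.Icc j n, n.choose i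

lemma T_of_lt {m j : ℕ} (h : m < j) : T m j = 0 := by
  unfold T
  rw [Finset.Icc_eq_empty (by omega), Finset.sum_empty]

lemma T_self (m : ℕ) : T m m = 1 := by
  unfold T
  rw [Finset.Icc_self, Finset.sum_singleton, Nat.choose_self]

lemma T_pascal (m j : ℕ) : T (m+1) (j+1) = T m (j+1) + T m j := by
  unfold T
  rcases le_or_gt (j+1) (m+1) with h | h
  · have h1 : ∀ i ∈ Finset.Icc (j+1) (m+1), (m+1).choose i = m.choose i + m.choose (i-1) := by
      intro i hi
      rw [Finset.mem_Icc] at hi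
      obtain ⟨i, rfl⟩ : ∃ i', i = i' + 1 := ⟨i - 1, by omega⟩
      rw [Nat.choose_succ_succ']
      simp [Nat.add_comm]
    rw [Finset.sum_congr rfl h1, Finset.sum_add_distrib]
    congr 1
    · -- ∑ i ∈ Icc (j+1) (m+1), m.choose i = ∑ i ∈ Icc (j+1) m
      rw [show m + 1 = m + 1 from rfl, Finset.sum_Icc_succ_top h, Nat.choose_succ_self, add_zero]
    · -- reindex i ↦ i - 1
      have himg : Finset.Icc (j+1) (m+1) = (Finset.Icc j m).image (· + 1) := by
        ext x
        simp only [Finset.mem_Icc, Finset.mem_image]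
        constructor
        · intro hx; exact ⟨x - 1, ⟨by omega, by omega⟩, by omega⟩
        · rintro ⟨a, ha, rfl⟩; omega
      rw [himg, Finset.sum_image (by intro a _ b _ h; simp only at h; omega)]
      simp
  · rw [Finset.Icc_eq_empty (by omega), Finset.sum_empty,
      Finset.Icc_eq_empty (by omega : ¬ j + 1 ≤ m), Finset.sum_empty,
      Finset.Icc_eq_empty (by omega : ¬ j ≤ m), Finset.sum_empty]
    rfl

lemma T_zero (m : ℕ) : T m 0 = 2^m := by
  unfold T
  rw [← Nat.sum_range_choose m]
  rw [show Finset.Icc 0 m = Finset.range (m+1) from by ext x; simp [Nat.lt_succ_iff]]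

lemma T_one_add_one (m : ℕ) : T m 1 + 1 = 2^m := by
  have h0 := T_zero m
  unfold T at *
  have : Finset.Icc 0 m = insert 0 (Finset.Icc 1 m) := by
    ext x; simp [Finset.mem_Icc, Finset.mem_insert]; omega
  rw [this, Finset.sum_insert (by simp)] at h0
  simpa [add_comm] using h0

lemma T_anti (m j : ℕ) : T m (j+1) ≤ T m j := by
  unfold T
  apply Finset.sum_le_sum_of_subset
  intro x; simp only [Finset.mem_Icc]; omega

lemma T_pos {m j : ℕ} (h : j ≤ m) : 0 < T m j := by
  unfold T
  apply Finset.sum_pos'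
  · intro i _; exact Nat.zero_le _
  · exact ⟨m, by simp [Finset.mem_Icc, h], by simp [Nat.choose_self]⟩

section Part2
variable {s : Finset ℕ} {F : Finset (Finset ℕ)} {e : ℕ}

/-- `F` is an up-set on ground set `s`. -/
def UpSet (s : Finset ℕ) (F : Finset (Finset ℕ)) : Prop :=
  (∀ A ∈ F, A ⊆ s) ∧ ∀ A ∈ F, ∀ B : Finset ℕ, A ⊆ B → B ⊆ s → B ∈ F

/-- `F` together with its shadow. -/
def Gam (F : Finset (Finset ℕ)) : Finset (Finset ℕ) := F ∪ Finset.shadow F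

/-- All subsets of `s` of size at least `k`. -/
def top (k : ℕ) (s : Finset ℕ) : Finset (Finset ℕ) :=
  (s.powerset).filter (fun A => k ≤ A.card)

/-- The link of `e`: sets containing `e`, with `e` removed. -/
def link (e : ℕ) (F : Finset (Finset ℕ)) : Finset (Finset ℕ) :=
  (F.filter (fun A => e ∈ A)).image (fun A => A.erase e)

/-- The sets of `F` not containing `e`. -/
def rest (e : ℕ) (F : Finset (Finset ℕ)) : Finset (Finset ℕ) := F.filter (fun A => e ∉ A)

/-- `F` is compressed towards `e`. -/
def eComp (e : ℕ) (F : Finset (Finset ℕ)) : Prop :=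
  ∀ A ∈ F, ∀ j ∈ A, e ∉ A → insert e (A.erase j) ∈ F

lemma mem_top {k : ℕ} {A : Finset ℕ} : A ∈ top k s ↔ A ⊆ s ∧ k ≤ A.card := by
  simp [top]

lemma top_upset (k : ℕ) (s : Finset ℕ) : UpSet s (top k s) := by
  constructor
  · intro A hA; exact (mem_top.1 hA).1
  · intro A hA B hAB hBs
    rw [mem_top] at hA ⊢
    exact ⟨hBs, le_trans hA.2 (Finset.card_le_card hAB)⟩

lemma card_top (k : ℕ) (s : Finset ℕ) : (top k s).card = T s.card k := by
  classical
  have h : top k s = (Finset.Icc k s.card).biUnion (fun i => s.powersetCard i) := by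
    ext A
    simp only [mem_top, Finset.mem_biUnion, Finset.mem_Icc, Finset.mem_powersetCard]
    constructor
    · intro ⟨h1, h2⟩; exact ⟨A.card, ⟨h2, Finset.card_le_card h1⟩, h1, rfl⟩
    · rintro ⟨i, ⟨hi1, _⟩, hA, rfl⟩; exact ⟨hA, hi1⟩
  rw [h, Finset.card_biUnion]
  · unfold T
    apply Finset.sum_congr rfl
    intro i _
    exact Finset.card_powersetCard i s
  · intro i _ j _ hij
    apply Finset.disjoint_left.2
    intro A hA hA'
    rw [Finset.mem_powersetCard] at hA hA'
    exact hij (hA.2 ▸ hA'.2.symm ▸ rfl)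

lemma upset_mem_self (h : UpSet s F) (hne : F.Nonempty) : s ∈ F := by
  obtain ⟨A, hA⟩ := hne
  exact h.2 A hA s (h.1 A hA) Finset.Subset.rfl

lemma self_not_mem_shadow (h : UpSet s F) : s ∉ Finset.shadow F := by
  intro hs
  rw [Finset.mem_shadow_iff] at hs
  obtain ⟨B, hB, a, ha, hBa⟩ := hs
  have h1 : B.card ≤ s.card := Finset.card_le_card (h.1 B hB)
  have h2 : (B.erase a).card = B.card - 1 := Finset.card_erase_of_mem ha
  have h3 : 0 < B.card := Finset.card_pos.2 ⟨a, ha⟩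
  rw [hBa] at h2
  omega

lemma gam_eq_insert (h : UpSet s F) (hne : F.Nonempty) :
    Gam F = insert s (Finset.shadow F) := by
  ext A
  simp only [Gam, Finset.mem_union, Finset.mem_insert]
  constructor
  · rintro (hA | hA)
    · by_cases hAs : A = s
      · exact Or.inl hAs
      · right
        rw [Finset.mem_shadow_iff_insert_mem]
        have hsub : A ⊆ s := h.1 A hA
        obtain ⟨x, hxs, hxA⟩ : ∃ x ∈ s, x ∉ A := by
          by_contra hc
          push_neg at hc
          exact hAs (Finset.Subset.antisymm hsub hc)
        exact ⟨x, hxA, h.2 A hA _ (Finset.subset_insert x A) (Finset.insert_subset hxs hsub)⟩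
    · exact Or.inr hA
  · rintro (rfl | hA)
    · exact Or.inl (upset_mem_self h hne)
    · exact Or.inr hA

lemma card_gam (h : UpSet s F) (hne : F.Nonempty) :
    (Gam F).card = (Finset.shadow F).card + 1 := by
  rw [gam_eq_insert h hne, Finset.card_insert_of_notMem (self_not_mem_shadow h)]

lemma gam_subset_powerset (h : UpSet s F) : Gam F ⊆ s.powerset := by
  intro A hA
  rw [Finset.mem_powerset]
  rcases Finset.mem_union.1 hA with hA | hA
  · exact h.1 A hA
  · obtain ⟨B, hB, hAB⟩ := Finset.exists_subset_of_mem_shadow hA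
    exact hAB.trans (h.1 B hB)

lemma subset_gam : F ⊆ Gam F := Finset.subset_union_left

lemma card_split (e : ℕ) (F : Finset (Finset ℕ)) :
    F.card = (rest e F).card + (link e F).card := by
  classical
  have h1 : (link e F).card = (F.filter (fun A => e ∈ A)).card := by
    apply Finset.card_image_of_injOn
    intro A hA B hB hAB
    rw [Finset.mem_coe, Finset.mem_filter] at hA hB
    simp only at hAB
    have : insert e (A.erase e) = insert e (B.erase e) := by rw [hAB]
    rwa [Finset.insert_erase hA.2, Finset.insert_erase hB.2] at this
  rw [h1, rest, add_comm]
  rw [Finset.card_filter_add_card_filter_not]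

lemma mem_link {A : Finset ℕ} : A ∈ link e F ↔ e ∉ A ∧ insert e A ∈ F := by
  constructor
  · intro hA
    obtain ⟨B, hB, rfl⟩ := Finset.mem_image.1 hA
    rw [Finset.mem_filter] at hB
    exact ⟨Finset.notMem_erase e B, by rw [Finset.insert_erase hB.2]; exact hB.1⟩
  · intro ⟨h1, h2⟩
    rw [link, Finset.mem_image]
    exact ⟨insert e A, Finset.mem_filter.2 ⟨h2, Finset.mem_insert_self e A⟩,
      by rw [Finset.erase_insert h1]⟩

lemma mem_rest {A : Finset ℕ} : A ∈ rest e F ↔ A ∈ F ∧ e ∉ A := Finset.mem_filter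

lemma link_upset (h : UpSet s F) (he : e ∈ s) : UpSet (s.erase e) (link e F) := by
  constructor
  · intro A hA
    rw [mem_link] at hA
    intro x hx
    rw [Finset.mem_erase]
    exact ⟨fun hxe => hA.1 (hxe ▸ hx), h.1 _ hA.2 (Finset.mem_insert_of_mem hx)⟩
  · intro A hA B hAB hBs
    rw [mem_link] at hA ⊢
    have heB : e ∉ B := fun hc => (Finset.mem_erase.1 (hBs hc)).1 rfl
    refine ⟨heB, h.2 _ hA.2 _ (Finset.insert_subset_insert e hAB) ?_⟩
    apply Finset.insert_subset he
    exact hBs.trans (Finset.erase_subset e s)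

lemma rest_upset (h : UpSet s F) : UpSet (s.erase e) (rest e F) := by
  constructor
  · intro A hA
    rw [mem_rest] at hA
    intro x hx
    rw [Finset.mem_erase]
    exact ⟨fun hc => hA.2 (hc ▸ hx), h.1 A hA.1 hx⟩
  · intro A hA B hAB hBs
    rw [mem_rest] at hA ⊢
    have heB : e ∉ B := fun hc => (Finset.mem_erase.1 (hBs hc)).1 rfl
    exact ⟨h.2 A hA.1 B hAB (hBs.trans (Finset.erase_subset e s)), heB⟩

lemma rest_subset_link (h : UpSet s F) (he : e ∈ s) : rest e F ⊆ link e F := by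
  intro A hA
  rw [mem_rest] at hA
  rw [mem_link]
  exact ⟨hA.2, h.2 A hA.1 _ (Finset.subset_insert e A)
    (Finset.insert_subset he (h.1 A hA.1))⟩

lemma shadow_rest_subset_link (hc : eComp e F) : Finset.shadow (rest e F) ⊆ link e F := by
  intro A hA
  rw [Finset.mem_shadow_iff] at hA
  obtain ⟨B, hB, j, hj, rfl⟩ := hA
  rw [mem_rest] at hB
  rw [mem_link]
  refine ⟨fun hc' => hB.2 (Finset.erase_subset j B hc'), ?_⟩
  exact hc B hB.1 j hj hB.2

lemma gam_rest_subset_link (h : UpSet s F) (he : e ∈ s) (hc : eComp e F) :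
    Gam (rest e F) ⊆ link e F :=
  Finset.union_subset (rest_subset_link h he) (shadow_rest_subset_link hc)

lemma link_nonempty (h : UpSet s F) (hne : F.Nonempty) (he : e ∈ s) :
    (link e F).Nonempty := by
  refine ⟨s.erase e, ?_⟩
  rw [mem_link]
  exact ⟨Finset.notMem_erase e s, by rw [Finset.insert_erase he]; exact upset_mem_self h hne⟩

lemma card_link_le (h : UpSet s F) (he : e ∈ s) : (link e F).card ≤ 2 ^ (s.erase e).card := by
  calc (link e F).card ≤ ((s.erase e).powerset).card := by
        apply Finset.card_le_card
        intro A hA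
        rw [Finset.mem_powerset]
        exact (link_upset h he).1 A hA
    _ = 2 ^ (s.erase e).card := Finset.card_powerset _

end Part2

section Part3
variable {s : Finset ℕ} {F : Finset (Finset ℕ)} {e : ℕ}

lemma shadow_top (k : ℕ) (s : Finset ℕ) :
    Finset.shadow (top (k+1) s) = (top k s).erase s := by
  ext A
  rw [Finset.mem_shadow_iff_insert_mem, Finset.mem_erase]
  constructor
  · rintro ⟨a, haA, h⟩
    rw [mem_top] at h
    have haS : a ∈ s := h.1 (Finset.mem_insert_self a A)
    have hAs : A ⊆ s := (Finset.subset_insert a A).trans h.1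
    have hcard : (insert a A).card = A.card + 1 := Finset.card_insert_of_notMem haA
    refine ⟨?_, mem_top.2 ⟨hAs, by omega⟩⟩
    rintro rfl
    exact haA haS
  · rintro ⟨hAs, hA⟩
    rw [mem_top] at hA
    obtain ⟨a, haS, haA⟩ : ∃ a ∈ s, a ∉ A := by
      by_contra hcon
      push_neg at hcon
      exact hAs (Finset.Subset.antisymm hA.1 hcon)
    refine ⟨a, haA, mem_top.2 ⟨Finset.insert_subset haS hA.1, ?_⟩⟩
    rw [Finset.card_insert_of_notMem haA]
    omega

lemma gam_filter_not_mem (h : UpSet s F) (he : e ∈ s) (hc : eComp e F) :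
    (Gam F).filter (fun A => e ∉ A) = link e F := by
  ext A
  rw [Finset.mem_filter]
  constructor
  · rintro ⟨hA, heA⟩
    rcases Finset.mem_union.1 hA with hA | hA
    · exact mem_link.2 ⟨heA, h.2 A hA _ (Finset.subset_insert e A)
        (Finset.insert_subset he (h.1 A hA))⟩
    · rw [Finset.mem_shadow_iff_insert_mem] at hA
      obtain ⟨x, hxA, hxF⟩ := hA
      by_cases hxe : x = e
      · exact mem_link.2 ⟨heA, hxe ▸ hxF⟩
      · have heB : e ∉ insert x A := by
          simp only [Finset.mem_insert]
          rintro (rfl | hcon)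
          exacts [hxe rfl, heA hcon]
        have := hc (insert x A) hxF x (Finset.mem_insert_self x A) heB
        rw [Finset.erase_insert hxA] at this
        exact mem_link.2 ⟨heA, this⟩
  · intro hA
    have := mem_link.1 hA
    refine ⟨Finset.mem_union_right _ ?_, this.1⟩
    rw [Finset.mem_shadow_iff_insert_mem]
    exact ⟨e, this.1, this.2⟩

lemma gam_filter_mem_image (h : UpSet s F) :
    ((Gam F).filter (fun A => e ∈ A)).image (fun A => A.erase e) = Gam (link e F) := by
  ext X
  rw [Finset.mem_image]
  constructor
  · rintro ⟨A, hA, rfl⟩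
    rw [Finset.mem_filter] at hA
    obtain ⟨hA, heA⟩ := hA
    rcases Finset.mem_union.1 hA with hA | hA
    · apply Finset.mem_union_left
      exact mem_link.2 ⟨Finset.notMem_erase e A, by rw [Finset.insert_erase heA]; exact hA⟩
    · apply Finset.mem_union_right
      rw [Finset.mem_shadow_iff_insert_mem] at hA
      obtain ⟨x, hxA, hxF⟩ := hA
      have hxe : x ≠ e := fun hcon => hxA (hcon ▸ heA)
      rw [Finset.mem_shadow_iff_insert_mem]
      refine ⟨x, fun hcon => hxA (Finset.erase_subset e A hcon), ?_⟩
      rw [mem_link]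
      constructor
      · simp only [Finset.mem_insert]
        rintro (rfl | hcon)
        exacts [hxe rfl, Finset.notMem_erase e A hcon]
      · rw [Finset.insert_comm, Finset.insert_erase heA]
        exact hxF
  · intro hX
    rcases Finset.mem_union.1 hX with hX | hX
    · rw [mem_link] at hX
      refine ⟨insert e X, Finset.mem_filter.2 ⟨Finset.mem_union_left _ hX.2,
        Finset.mem_insert_self e X⟩, Finset.erase_insert hX.1⟩
    · rw [Finset.mem_shadow_iff_insert_mem] at hX
      obtain ⟨x, hxX, hxL⟩ := hX
      rw [mem_link] at hxL
      obtain ⟨hex, hF⟩ := hxL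
      have hxe : x ≠ e := fun hcon => hex (hcon ▸ Finset.mem_insert_self x X)
      have heX : e ∉ X := fun hcon => hex (Finset.mem_insert_of_mem hcon)
      refine ⟨insert e X, Finset.mem_filter.2 ⟨Finset.mem_union_right _ ?_,
        Finset.mem_insert_self e X⟩, Finset.erase_insert heX⟩
      rw [Finset.mem_shadow_iff_insert_mem]
      refine ⟨x, ?_, ?_⟩
      · simp only [Finset.mem_insert]
        rintro (rfl | hcon)
        exacts [hxe rfl, hxX hcon]
      · rw [Finset.insert_comm]
        exact hF

lemma gam_split (h : UpSet s F) (he : e ∈ s) (hc : eComp e F) :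
    (Gam F).card = (link e F).card + (Gam (link e F)).card := by
  have h1 : ((Gam F).filter (fun A => e ∈ A)).card = (Gam (link e F)).card := by
    rw [← gam_filter_mem_image (e := e) h]
    apply (Finset.card_image_of_injOn _).symm
    intro A hA B hB hAB
    rw [Finset.mem_coe, Finset.mem_filter] at hA hB
    simp only at hAB
    have : insert e (A.erase e) = insert e (B.erase e) := by rw [hAB]
    rwa [Finset.insert_erase hA.2, Finset.insert_erase hB.2] at this
  have h2 : ((Gam F).filter (fun A => ¬ e ∈ A)).card = (link e F).card := by
    rw [gam_filter_not_mem h he hc]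
  calc (Gam F).card
      = ((Gam F).filter (fun A => e ∈ A)).card + ((Gam F).filter (fun A => ¬ e ∈ A)).card :=
        (Finset.card_filter_add_card_filter_not _).symm
    _ = (link e F).card + (Gam (link e F)).card := by rw [h1, h2]; omega

end Part3

section Part4
open UV
variable {s : Finset ℕ} {F : Finset (Finset ℕ)} {e j : ℕ}

lemma compress_of_cond {A : Finset ℕ} (hej : e ≠ j) (he : e ∉ A) (hj : j ∈ A) :
    UV.compress {e} {j} A = insert e (A.erase j) := by
  rw [UV.compress, if_pos ⟨Finset.disjoint_singleton_left.2 he, Finset.singleton_subset_iff.2 hj⟩]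
  ext x
  simp only [Finset.mem_sdiff, Finset.sup_eq_union, Finset.mem_union, Finset.mem_singleton,
    Finset.mem_insert, Finset.mem_erase]
  constructor
  · rintro ⟨h1 | h1, h2⟩
    · exact Or.inr ⟨h2, h1⟩
    · exact Or.inl h1
  · rintro (rfl | ⟨h1, h2⟩)
    · exact ⟨Or.inr rfl, hej⟩
    · exact ⟨Or.inl h2, h1⟩

lemma compress_of_not_cond {A : Finset ℕ} (h : ¬ (e ∉ A ∧ j ∈ A)) :
    UV.compress {e} {j} A = A := by
  rw [UV.compress, if_neg]
  intro hcon
  exact h ⟨Finset.disjoint_singleton_left.1 hcon.1, Finset.singleton_subset_iff.1 hcon.2⟩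

/-- Our fixed-instance wrapper for UV compression by singletons. -/
def comp (e j : ℕ) (F : Finset (Finset ℕ)) : Finset (Finset ℕ) := UV.compression {e} {j} F

lemma comp_card (e j : ℕ) (F : Finset (Finset ℕ)) : (comp e j F).card = F.card := by
  unfold comp
  exact UV.card_compression _ _ _

lemma comp_shadow_le (e j : ℕ) (F : Finset (Finset ℕ)) :
    (Finset.shadow (comp e j F)).card ≤ (Finset.shadow F).card := by
  unfold comp
  refine UV.card_shadow_compression_le _ _ ?_
  intro x hx
  rw [Finset.mem_singleton] at hx
  subst hx
  refine ⟨j, Finset.mem_singleton_self j, ?_⟩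
  rw [Finset.erase_singleton, Finset.erase_singleton]
  exact UV.isCompressed_self ∅ F

lemma comp_self (e : ℕ) (F : Finset (Finset ℕ)) : comp e e F = F := by
  unfold comp
  exact UV.compression_self _ _

lemma mem_comp {A : Finset ℕ} :
    A ∈ comp e j F ↔ (A ∈ F ∧ UV.compress {e} {j} A ∈ F) ∨
      (A ∉ F ∧ ∃ b ∈ F, UV.compress {e} {j} b = A) := by
  unfold comp
  exact UV.mem_compression

lemma compress_mem_comp {A : Finset ℕ} (hA : A ∈ F) : UV.compress {e} {j} A ∈ comp e j F := by
  unfold comp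
  exact UV.compress_mem_compression hA

lemma comp_upset (h : UpSet s F) (he : e ∈ s) (hj : j ∈ s) (hej : e ≠ j) :
    UpSet s (comp e j F) := by
  constructor
  · intro A hA
    rcases mem_comp.1 hA with ⟨hA1, -⟩ | ⟨-, b, hb, rfl⟩
    · exact h.1 A hA1
    · by_cases hc : e ∉ b ∧ j ∈ b
      · rw [compress_of_cond hej hc.1 hc.2]
        exact Finset.insert_subset he ((Finset.erase_subset j b).trans (h.1 b hb))
      · rw [compress_of_not_cond hc]
        exact h.1 b hb
  · intro A hA B hAB hBs
    rcases mem_comp.1 hA with ⟨hA1, hA2⟩ | ⟨hA1, b, hb, rfl⟩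
    · -- A ∈ F and compress A ∈ F
      have hBF : B ∈ F := h.2 A hA1 B hAB hBs
      have hcB : UV.compress {e} {j} B ∈ F := by
        by_cases hc : e ∉ B ∧ j ∈ B
        · rw [compress_of_cond hej hc.1 hc.2]
          have heA : e ∉ A := fun hcon => hc.1 (hAB hcon)
          have hBs' : insert e (B.erase j) ⊆ s :=
            Finset.insert_subset he ((Finset.erase_subset j B).trans hBs)
          by_cases hjA : j ∈ A
          · rw [compress_of_cond hej heA hjA] at hA2
            refine h.2 _ hA2 _ ?_ hBs'
            exact Finset.insert_subset_insert e (Finset.erase_subset_erase j hAB)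
          · refine h.2 A hA1 _ ?_ hBs'
            intro x hx
            exact Finset.mem_insert_of_mem (Finset.mem_erase.2 ⟨fun hcon => hjA (hcon ▸ hx), hAB hx⟩)
        · rw [compress_of_not_cond hc]
          exact hBF
      exact mem_comp.2 (Or.inl ⟨hBF, hcB⟩)
    · -- A = compress b, A ∉ F
      by_cases hc : e ∉ b ∧ j ∈ b
      · rw [compress_of_cond hej hc.1 hc.2] at hA1 hAB
        have heB : e ∈ B := hAB (Finset.mem_insert_self e _)
        by_cases hjB : j ∈ B
        · have hbB : b ⊆ B := by
            intro x hx
            by_cases hxj : x = j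
            · exact hxj ▸ hjB
            · exact hAB (Finset.mem_insert_of_mem (Finset.mem_erase.2 ⟨hxj, hx⟩))
          have hBF : B ∈ F := h.2 b hb B hbB hBs
          have hcmp : UV.compress {e} {j} B = B :=
            compress_of_not_cond (fun hcon => hcon.1 heB)
          exact mem_comp.2 (Or.inl ⟨hBF, by rw [hcmp]; exact hBF⟩)
        · by_cases hBF : B ∈ F
          · have hcmp : UV.compress {e} {j} B = B :=
              compress_of_not_cond (fun hcon => hcon.1 heB)
            exact mem_comp.2 (Or.inl ⟨hBF, by rw [hcmp]; exact hBF⟩)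
          · set bB := insert j (B.erase e) with hbBdef
            have hbBF : bB ∈ F := by
              refine h.2 b hb bB ?_ ?_
              · intro x hx
                by_cases hxj : x = j
                · exact hxj ▸ Finset.mem_insert_self j _
                · have hxA : x ∈ insert e (b.erase j) :=
                    Finset.mem_insert_of_mem (Finset.mem_erase.2 ⟨hxj, hx⟩)
                  have hxB : x ∈ B := hAB hxA
                  have hxe : x ≠ e := fun hcon => hc.1 (hcon ▸ hx)
                  exact Finset.mem_insert_of_mem (Finset.mem_erase.2 ⟨hxe, hxB⟩)
              · exact Finset.insert_subset hj ((Finset.erase_subset e B).trans hBs)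
            have hcomp : UV.compress {e} {j} bB = B := by
              have hebB : e ∉ bB := by
                simp only [hbBdef, Finset.mem_insert, Finset.mem_erase]
                rintro (rfl | ⟨hcon, -⟩)
                exacts [hej rfl, hcon rfl]
              rw [compress_of_cond hej hebB (Finset.mem_insert_self j _), hbBdef,
                Finset.erase_insert (fun hcon => hjB (Finset.mem_of_mem_erase hcon)),
                Finset.insert_erase heB]
            exact mem_comp.2 (Or.inr ⟨hBF, bB, hbBF, hcomp⟩)
      · rw [compress_of_not_cond hc] at hA1
        exact absurd hb hA1

lemma rest_comp_subset : rest e (comp e j F) ⊆ rest e F := by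
  intro A hA
  rw [mem_rest] at hA ⊢
  refine ⟨?_, hA.2⟩
  rcases mem_comp.1 hA.1 with ⟨h1, -⟩ | ⟨h1, b, hb, rfl⟩
  · exact h1
  · by_cases hc : e ∉ b ∧ j ∈ b
    · exfalso
      have hej : e ≠ j := by rintro rfl; exact hc.1 hc.2
      apply hA.2
      rw [compress_of_cond hej hc.1 hc.2]
      exact Finset.mem_insert_self e _
    · rwa [compress_of_not_cond hc]

lemma rest_comp_lt (hne : comp e j F ≠ F) :
    (rest e (comp e j F)).card < (rest e F).card := by
  have hcard := comp_card e j F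
  have hns : ¬ (comp e j F ⊆ F) := fun hsub =>
    hne (Finset.eq_of_subset_of_card_le hsub hcard.ge)
  obtain ⟨A, hA𝓒, hAF⟩ := Finset.not_subset.1 hns
  rcases mem_comp.1 hA𝓒 with ⟨h1, -⟩ | ⟨-, b, hbF, hbA⟩
  · exact absurd h1 hAF
  have hc : e ∉ b ∧ j ∈ b := by
    by_contra hcon
    rw [compress_of_not_cond hcon] at hbA
    exact hAF (hbA ▸ hbF)
  have hbmem : b ∈ rest e F := mem_rest.2 ⟨hbF, hc.1⟩
  have hsub : rest e (comp e j F) ⊆ (rest e F).erase b := by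
    intro X hX
    rw [Finset.mem_erase]
    refine ⟨?_, rest_comp_subset hX⟩
    rintro rfl
    have hb2 : X ∈ comp e j F := (mem_rest.1 hX).1
    rcases mem_comp.1 hb2 with ⟨-, h2⟩ | ⟨h1, -⟩
    · rw [hbA] at h2
      exact hAF h2
    · exact h1 hbF
  calc (rest e (comp e j F)).card ≤ ((rest e F).erase b).card := Finset.card_le_card hsub
    _ < (rest e F).card := by
        rw [Finset.card_erase_of_mem hbmem]
        have := Finset.card_pos.2 ⟨b, hbmem⟩
        omega

lemma ecomp_of_stable (h : UpSet s F) (hstable : ∀ j ∈ s, comp e j F = F) :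
    eComp e F := by
  intro A hA j hj heA
  have hjs : j ∈ s := h.1 A hA hj
  have hej : e ≠ j := fun hcon => heA (hcon ▸ hj)
  have h2 := compress_mem_comp (e := e) (j := j) hA
  rw [hstable j hjs, compress_of_cond hej heA hj] at h2
  exact h2

lemma exists_ecomp (he : e ∈ s) :
    ∀ (N : ℕ) (F : Finset (Finset ℕ)), (rest e F).card ≤ N → UpSet s F →
    ∃ G, UpSet s G ∧ eComp e G ∧ G.card = F.card ∧
      (Finset.shadow G).card ≤ (Finset.shadow F).card ∧
      ∀ k, G ⊆ top k s → F ⊆ top k s := by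
  intro N
  induction N with
  | zero =>
    intro F hN h
    by_cases hstable : ∀ j ∈ s, comp e j F = F
    · exact ⟨F, h, ecomp_of_stable h hstable, rfl, le_refl _, fun _ h' => h'⟩
    · exfalso
      push_neg at hstable
      obtain ⟨j, _, hne⟩ := hstable
      have := rest_comp_lt hne
      omega
  | succ N ih =>
    intro F hN h
    by_cases hstable : ∀ j ∈ s, comp e j F = F
    · exact ⟨F, h, ecomp_of_stable h hstable, rfl, le_refl _, fun _ h' => h'⟩
    · push_neg at hstable
      obtain ⟨j, hjs, hne⟩ := hstable
      have hej : e ≠ j := by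
        rintro rfl
        exact hne (comp_self e F)
      have hlt := rest_comp_lt hne
      have hup' := comp_upset h he hjs hej
      obtain ⟨G, hG1, hG2, hG3, hG4, hG5⟩ := ih (comp e j F) (by omega) hup'
      refine ⟨G, hG1, hG2, by rw [hG3, comp_card], hG4.trans (comp_shadow_le e j F), ?_⟩
      intro k hk
      have h1 : comp e j F ⊆ top k s := hG5 k hk
      intro A hA
      have h2 := compress_mem_comp (e := e) (j := j) hA
      have h3 := h1 h2
      rw [mem_top] at h3 ⊢
      refine ⟨h.1 A hA, ?_⟩
      have hcc : (UV.compress {e} {j} A).card = A.card := UV.card_compress (by simp) A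
      omega

end Part4

section Part5

lemma gam_almost_full {s' : Finset ℕ} {L : Finset (Finset ℕ)} (h : UpSet s' L)
    (hne : L.Nonempty) (hc : 2 ^ s'.card ≤ L.card + 1) : 2 ^ s'.card ≤ (Gam L).card := by
  have hsub : s'.powerset ⊆ Gam L := by
    intro X hX
    rw [Finset.mem_powerset] at hX
    by_cases hXL : X ∈ L
    · exact subset_gam hXL
    · have hXs : X ≠ s' := fun hcon => hXL (hcon ▸ upset_mem_self h hne)
      obtain ⟨y, hys, hyX⟩ : ∃ y ∈ s', y ∉ X := by
        by_contra hcon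
        push_neg at hcon
        exact hXs (Finset.Subset.antisymm hX hcon)
      have hins : insert y X ∈ L := by
        by_contra hcon
        have hsub2 : L ⊆ (s'.powerset.erase X).erase (insert y X) := by
          intro A hA
          rw [Finset.mem_erase, Finset.mem_erase, Finset.mem_powerset]
          exact ⟨fun hc2 => hcon (hc2 ▸ hA), fun hc2 => hXL (hc2 ▸ hA), h.1 A hA⟩
        have hc1 : insert y X ∈ s'.powerset.erase X := by
          rw [Finset.mem_erase, Finset.mem_powerset]
          exact ⟨fun hc2 => hyX (hc2 ▸ Finset.mem_insert_self y X), Finset.insert_subset hys hX⟩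
        have hc2 : X ∈ s'.powerset := Finset.mem_powerset.2 hX
        have hle := Finset.card_le_card hsub2
        have hcc1 : ((s'.powerset.erase X).erase (insert y X)).card
            = (s'.powerset.erase X).card - 1 := Finset.card_erase_of_mem hc1
        have hcc2 : (s'.powerset.erase X).card = s'.powerset.card - 1 :=
          Finset.card_erase_of_mem hc2
        rw [Finset.card_powerset] at hcc2
        have hppos : 0 < 2 ^ s'.card := pow_pos (by norm_num) _
        have hLpos : 0 < L.card := Finset.card_pos.2 hne
        generalize hgen : 2 ^ s'.card = P at hc hppos hcc2
        omega
      apply Finset.mem_union_right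
      rw [Finset.mem_shadow_iff_insert_mem]
      exact ⟨y, hyX, hins⟩
  calc 2 ^ s'.card = s'.powerset.card := (Finset.card_powerset s').symm
    _ ≤ (Gam L).card := Finset.card_le_card hsub

lemma main_ineq : ∀ (m : ℕ) (s : Finset ℕ), s.card = m → ∀ (j ε : ℕ) (F : Finset (Finset ℕ)),
    1 ≤ j → ε ≤ 1 → UpSet s F → F.Nonempty → T m (j+1) + ε ≤ F.card →
    T m j + ε ≤ (Gam F).card := by
  intro m
  induction m with
  | zero =>
    intro s hs j ε F hj hε hup hne hcard
    have h1 : F.card ≤ (Gam F).card := Finset.card_le_card subset_gam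
    have h2 : 0 < F.card := Finset.card_pos.2 hne
    rw [T_of_lt (by omega : (0:ℕ) < j)]
    have h3 : T 0 (j+1) = 0 := T_of_lt (by omega)
    omega
  | succ m ih =>
    intro s hs j ε F hj hε hup hne hcard
    obtain ⟨e, he⟩ := Finset.card_pos.1 (by omega : 0 < s.card)
    have hs' : (s.erase e).card = m := by have := Finset.card_erase_of_mem (s := s) he; omega
    obtain ⟨G, hGup, hGcomp, hGcard, hGsh, -⟩ := exists_ecomp he (rest e F).card F le_rfl hup
    have hGne : G.Nonempty := Finset.card_pos.1 (by rw [hGcard]; exact Finset.card_pos.2 hne)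
    have hGamLe : (Gam G).card ≤ (Gam F).card := by
      rw [card_gam hGup hGne, card_gam hup hne]
      omega
    have hsplit := gam_split hGup he hGcomp
    have hcardsplit := card_split e G
    set L := link e G with hLdef
    set R := rest e G with hRdef
    have hLup : UpSet (s.erase e) L := link_upset hGup he
    have hLne : L.Nonempty := link_nonempty hGup hGne he
    have hP := T_pascal m j
    have htot : T m (j+1) + T m j + ε ≤ R.card + L.card := by
      rw [← hcardsplit, hGcard]
      omega
    by_cases hA : T m j + ε ≤ L.card
    · by_cases hj2 : 2 ≤ j
      · obtain ⟨j', rfl⟩ : ∃ j', j = j' + 1 := ⟨j - 1, by omega⟩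
        have h2 := ih (s.erase e) hs' j' ε L (by omega) hε hLup hLne hA
        have hP' := T_pascal m j'
        omega
      · obtain rfl : j = 1 := by omega
        have hfull : 2 ^ m ≤ (Gam L).card := by
          have h3 : 2 ^ (s.erase e).card ≤ L.card + 1 := by
            rw [hs']
            have := T_one_add_one m
            omega
          have := gam_almost_full hLup hLne h3
          rwa [hs'] at this
        have h1 := T_one_add_one (m+1)
        have h2 := T_one_add_one m
        have hpow : 2^(m+1) = 2^m + 2^m := by ring
        omega
    · push_neg at hA
      have hR : T m (j+1) + 1 ≤ R.card := by omega
      have hRup : UpSet (s.erase e) R := rest_upset hGup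
      have hRne : R.Nonempty := Finset.card_pos.1 (by omega)
      have h2 := ih (s.erase e) hs' j 1 R hj le_rfl hRup hRne hR
      have h3 : Gam R ⊆ L := gam_rest_subset_link hGup he hGcomp
      have h4 := Finset.card_le_card h3
      omega

lemma top_erase_empty {s' : Finset ℕ} {K : ℕ} (h : s'.card < K) : top K s' = ∅ := by
  rw [Finset.eq_empty_iff_forall_notMem]
  intro A hA
  rw [mem_top] at hA
  have := Finset.card_le_card hA.1
  omega

lemma main_uniq : ∀ (m : ℕ) (s : Finset ℕ), s.card = m → ∀ (k : ℕ) (F : Finset (Finset ℕ)),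
    k + 1 ≤ m → UpSet s F → F.card = T m (k+1) → (Gam F).card ≤ T m k →
    F = top (k+1) s := by
  intro m
  induction m with
  | zero => intro s hs k F hk; omega
  | succ m ih =>
    intro s hs k F hk hup hcard hgam
    have hne : F.Nonempty := Finset.card_pos.1 (by rw [hcard]; exact T_pos hk)
    rcases Nat.eq_zero_or_pos k with rfl | hkpos
    · -- k = 0 : F = top 1 s, directly
      have h2m := T_one_add_one (m+1)
      have hbr0 : T (m+1) (0+1) = T (m+1) 1 := rfl
      have hnotempty : ∅ ∉ F := by
        intro h0
        have hsub : s.powerset ⊆ F := fun X hX =>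
          hup.2 ∅ h0 X (Finset.empty_subset X) (Finset.mem_powerset.1 hX)
        have := Finset.card_le_card hsub
        rw [Finset.card_powerset, hs, hcard] at this
        omega
      have hsub : F ⊆ top 1 s := by
        intro A hA
        rw [mem_top]
        refine ⟨hup.1 A hA, ?_⟩
        rcases Finset.eq_empty_or_nonempty A with rfl | hAne
        · exact absurd hA hnotempty
        · exact Finset.card_pos.2 hAne
      refine Finset.eq_of_subset_of_card_le hsub ?_
      rw [card_top, hs, hcard]
    · -- k ≥ 1
      obtain ⟨k', rfl⟩ : ∃ k', k = k' + 1 := ⟨k - 1, by omega⟩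
      set k := k' + 1 with hkdef
      have hbr1 : T (m+1) k = T (m+1) (k'+1) := rfl
      have hbr2 : T m k = T m (k'+1) := rfl
      have hbr3 : T (m+1) (k+1) = T (m+1) (k'+1+1) := rfl
      have hbr4 : T m (k+1) = T m (k'+1+1) := rfl
      obtain ⟨e, he⟩ := Finset.card_pos.1 (by omega : 0 < s.card)
      have hs' : (s.erase e).card = m := by have := Finset.card_erase_of_mem (s := s) he; omega
      obtain ⟨G, hGup, hGcomp, hGcard, hGsh, hGtrans⟩ :=
        exists_ecomp he (rest e F).card F le_rfl hup
      have hGne : G.Nonempty := Finset.card_pos.1 (by rw [hGcard]; exact Finset.card_pos.2 hne)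
      have hGamLe : (Gam G).card ≤ T (m+1) k := by
        rw [card_gam hGup hGne]
        rw [card_gam hup hne] at hgam
        omega
      have hsplit := gam_split hGup he hGcomp
      have hcardsplit := card_split e G
      set L := link e G with hLdef
      set R := rest e G with hRdef
      have hLup : UpSet (s.erase e) L := link_upset hGup he
      have hLne : L.Nonempty := link_nonempty hGup hGne he
      have hRup : UpSet (s.erase e) R := rest_upset hGup
      have hGamRL : Gam R ⊆ L := gam_rest_subset_link hGup he hGcomp
      have hGamRLcard := Finset.card_le_card hGamRL
      have hGsum : R.card + L.card = T (m+1) (k+1) := by rw [← hcardsplit, hGcard, hcard]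
      have hP1 := T_pascal m k   -- T (m+1) (k+1) = T m (k+1) + T m k
      have hP2 := T_pascal m k'  -- T (m+1) (k'+1) = T m (k'+1) + T m k'
      -- Step i : L.card ≤ T m k
      have hstepi : L.card ≤ T m k := by
        by_contra h'
        push_neg at h'
        rcases Nat.eq_zero_or_pos k' with rfl | hk'pos
        · -- k = 1
          have hbr5 : T m k = T m 1 := rfl
          have hbr6 : T (m+1) k = T (m+1) 1 := rfl
          have hLle : L.card ≤ 2 ^ m := by
            have := card_link_le hGup he (e := e)
            rwa [hs'] at this
          have hGamLge : L.card ≤ (Gam L).card := Finset.card_le_card subset_gam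
          have h1 := T_one_add_one m
          have h2 := T_one_add_one (m+1)
          have hpow : 2^(m+1) = 2^m + 2^m := by ring
          omega
        · have h2 := main_ineq m (s.erase e) hs' k' 1 L hk'pos le_rfl hLup hLne (by omega)
          omega
      -- Step ii : T m k ≤ L.card
      have hstepii : T m k ≤ L.card := by
        by_contra h'
        push_neg at h'
        have hRcard : T m (k+1) + 1 ≤ R.card := by omega
        have hRne : R.Nonempty := Finset.card_pos.1 (by omega)
        have h2 := main_ineq m (s.erase e) hs' k 1 R (by omega) le_rfl hRup hRne hRcard
        omega
      have hLcard : L.card = T m k := le_antisymm hstepi hstepii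
      have hRcard : R.card = T m (k+1) := by omega
      -- Step iii : L = top k (s.erase e)
      have hGamLcard : (Gam L).card ≤ T m k' := by omega
      have hLtop : L = top k (s.erase e) :=
        ih (s.erase e) hs' k' L (by omega) hLup (by rw [hLcard]) hGamLcard
      -- Step iv : R = top (k+1) (s.erase e)
      have hRtop : R = top (k+1) (s.erase e) := by
        by_cases hkm : k + 1 ≤ m
        · exact ih (s.erase e) hs' k R hkm hRup (by rw [hRcard]) (by omega)
        · have hT0 : T m (k+1) = 0 := T_of_lt (by omega)
          have hRemp : R = ∅ := Finset.card_eq_zero.1 (by omega)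
          rw [hRemp, top_erase_empty (by omega)]
      -- Step v : G = top (k+1) s
      have hGtop : G = top (k+1) s := by
        ext A
        have hAiff : A ∈ G ↔ (e ∈ A ∧ A.erase e ∈ L) ∨ (e ∉ A ∧ A ∈ R) := by
          constructor
          · intro hA
            by_cases heA : e ∈ A
            · refine Or.inl ⟨heA, mem_link.2 ⟨Finset.notMem_erase e A, ?_⟩⟩
              rw [Finset.insert_erase heA]
              exact hA
            · exact Or.inr ⟨heA, mem_rest.2 ⟨hA, heA⟩⟩
          · rintro (⟨heA, hL2⟩ | ⟨heA, hR2⟩)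
            · have := (mem_link.1 hL2).2
              rwa [Finset.insert_erase heA] at this
            · exact (mem_rest.1 hR2).1
        rw [hAiff]
        constructor
        · rintro (⟨heA, hL2⟩ | ⟨heA, hR2⟩)
          · rw [hLtop, mem_top] at hL2
            have hAs : A ⊆ s := by
              intro x hx
              by_cases hxe : x = e
              · exact hxe ▸ he
              · exact Finset.mem_of_mem_erase (hL2.1 (Finset.mem_erase.2 ⟨hxe, hx⟩))
            have hce : (A.erase e).card = A.card - 1 := Finset.card_erase_of_mem heA
            have hcpos : 0 < A.card := Finset.card_pos.2 ⟨e, heA⟩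
            have hL2c := hL2.2
            exact mem_top.2 ⟨hAs, by omega⟩
          · rw [hRtop, mem_top] at hR2
            exact mem_top.2 ⟨hR2.1.trans (Finset.erase_subset e s), hR2.2⟩
        · intro hA2
          rw [mem_top] at hA2
          obtain ⟨hAs, hAcard⟩ := hA2
          by_cases heA : e ∈ A
          · refine Or.inl ⟨heA, ?_⟩
            rw [hLtop, mem_top]
            refine ⟨Finset.erase_subset_erase e hAs, ?_⟩
            have hce : (A.erase e).card = A.card - 1 := Finset.card_erase_of_mem heA
            omega
          · refine Or.inr ⟨heA, ?_⟩
            rw [hRtop, mem_top]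
            exact ⟨Finset.subset_erase.2 ⟨hAs, heA⟩, hAcard⟩
      -- Step vi : F = top (k+1) s
      have hFsub : F ⊆ top (k+1) s := hGtrans (k+1) (by rw [hGtop])
      refine Finset.eq_of_subset_of_card_le hFsub ?_
      rw [card_top, hs, hcard]

end Part5

end UpsetShadow


/-- Lemma 21.  If `F ⊆ 2^[n]` is an up-set with
`|F| = ∑_{i=k}^n C(n,i)`, then `|∂F| ≥ ∑_{i=k−1}^{n−1} C(n,i)`, with equality
if and only if `F = {A ⊆ [n] : |A| ≥ k}`.  Here `∂` is the immediate shadow. -/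
theorem upset_shadow_bound (n k : ℕ) (hk1 : 1 ≤ k) (hkn : k ≤ n)
    (F : Finset (Finset ℕ)) (hsub : ∀ A ∈ F, A ⊆ Finset.Icc 1 n)
    (hup : ∀ A ∈ F, ∀ B : Finset ℕ, A ⊆ B → B ⊆ Finset.Icc 1 n → B ∈ F)
    (hcard : F.card = ∑ i ∈ Finset.Icc k n, n.choose i) :
    ∑ i ∈ Finset.Icc (k - 1) (n - 1), n.choose i ≤ (Finset.shadow F).card ∧
    ((Finset.shadow F).card = ∑ i ∈ Finset.Icc (k - 1) (n - 1), n.choose i ↔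
      F = (Finset.Icc 1 n).powerset.filter fun A => k ≤ A.card) := by
  obtain ⟨k', rfl⟩ : ∃ k', k = k' + 1 := ⟨k - 1, by omega⟩
  simp only [Nat.add_sub_cancel]
  set s := Finset.Icc 1 n with hsdef
  have hs : s.card = n := by rw [hsdef, Nat.card_Icc]; omega
  have hupset : UpsetShadow.UpSet s F := ⟨hsub, hup⟩
  have hcard' : F.card = UpsetShadow.T n (k'+1) := hcard
  have hne : F.Nonempty := Finset.card_pos.1
    (by rw [hcard']; exact UpsetShadow.T_pos (by omega))
  have hgam := UpsetShadow.card_gam hupset hne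
  have hn1 : n - 1 + 1 = n := by omega
  have hsplit := Finset.sum_Icc_succ_top (a := k') (b := n-1)
    (f := fun i => n.choose i) (by omega)
  rw [hn1, Nat.choose_self] at hsplit
  have hTk' : UpsetShadow.T n k' = (∑ i ∈ Finset.Icc k' (n-1), n.choose i) + 1 := hsplit
  have hTopShadow : (Finset.shadow (UpsetShadow.top (k'+1) s)).card
      = ∑ i ∈ Finset.Icc k' (n-1), n.choose i := by
    rw [UpsetShadow.shadow_top k' s,
      Finset.card_erase_of_mem (UpsetShadow.mem_top.2 ⟨Finset.Subset.rfl, by rw [hs]; omega⟩),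
      UpsetShadow.card_top, hs]
    omega
  have huniq : ∀ _ : (UpsetShadow.Gam F).card ≤ UpsetShadow.T n k',
      F = UpsetShadow.top (k'+1) s :=
    fun hle => UpsetShadow.main_uniq n s hs k' F (by omega) hupset hcard' hle
  have hineq : ∑ i ∈ Finset.Icc k' (n-1), n.choose i ≤ (Finset.shadow F).card := by
    rcases Nat.eq_zero_or_pos k' with rfl | hk'pos
    · have hle : (UpsetShadow.Gam F).card ≤ UpsetShadow.T n 0 := by
        rw [UpsetShadow.T_zero]
        calc (UpsetShadow.Gam F).card ≤ s.powerset.card :=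
              Finset.card_le_card (UpsetShadow.gam_subset_powerset hupset)
          _ = 2^n := by rw [Finset.card_powerset, hs]
      have hF0 := huniq hle
      rw [hF0, hTopShadow]
    · have h1 := UpsetShadow.main_ineq n s hs k' 0 F hk'pos (by omega) hupset hne (by omega)
      omega
  refine ⟨hineq, ?_, ?_⟩
  · intro hE
    have hle : (UpsetShadow.Gam F).card ≤ UpsetShadow.T n k' := by omega
    exact huniq hle
  · intro hF
    rw [hF]
    exact hTopShadow
end
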